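/- arXiv:2304.01846 — 3 statements merged into one kernel-verified Lean document; each statement's English description precedes it below -/
import Mathlib

section
/- For every integer m ≥ 2 and every d > 0 there exist ρ, c₀ > 0 such that if Γ is an n-vertex (ρ,d)-dense graph and n is sufficiently large, then Γ contains at least c₀·n^m copies of the complete graph K_m. -/
/-- The number of edges of `Γ` inside the vertex set `S` (edges of the induced graph `Γ[S]`). -/
noncomputable def edgesWithin {V : Type*} (Γ : SimpleGraph V) (S : Set V) : ℕ :=
  {e ∈ Γ.edgeSet | ∀ v ∈ e, v ∈ S}.ncard

/-- `Γ` is `(ρ,d)`-dense: every `S` with `|S| ≥ ρn` spans at least `d·C(|S|,2)` edges. -/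
def LocallyDense {n : ℕ} (Γ : SimpleGraph (Fin n)) (ρ d : ℝ) : Prop :=
  ∀ S : Set (Fin n), ρ * n ≤ S.ncard → d * (S.ncard.choose 2 : ℝ) ≤ (edgesWithin Γ S : ℝ)

open Finset

open scoped Classical in
noncomputable def cliquesIn {n : ℕ} (Γ : SimpleGraph (Fin n)) (m : ℕ)
    (U : Finset (Fin n)) : Finset (Finset (Fin n)) :=
  Finset.univ.filter fun s => Γ.IsNClique m s ∧ s ⊆ U

lemma mem_cliquesIn {n : ℕ} {Γ : SimpleGraph (Fin n)} {m : ℕ} {U s : Finset (Fin n)} :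
    s ∈ cliquesIn Γ m U ↔ Γ.IsNClique m s ∧ s ⊆ U := by
  simp [cliquesIn]

def pairFinset {α : Type*} [DecidableEq α] : Sym2 α → Finset α :=
  Sym2.lift ⟨fun a b => {a, b}, fun a b => Finset.pair_comm a b⟩

lemma pairFinset_inj {α : Type*} [DecidableEq α] :
    Function.Injective (pairFinset (α := α)) := by
  intro e₁ e₂ h
  induction' e₁ using Sym2.ind with a b
  induction' e₂ using Sym2.ind with c d
  simp only [pairFinset, Sym2.lift_mk] at h
  have ha : a = c ∨ a = d := by
    have : a ∈ ({c, d} : Finset α) := by rw [← h]; simp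
    simpa using this
  have hb : b = c ∨ b = d := by
    have : b ∈ ({c, d} : Finset α) := by rw [← h]; simp
    simpa using this
  have hc : c = a ∨ c = b := by
    have : c ∈ ({a, b} : Finset α) := by rw [h]; simp
    simpa using this
  have hd : d = a ∨ d = b := by
    have : d ∈ ({a, b} : Finset α) := by rw [h]; simp
    simpa using this
  rw [Sym2.eq_iff]
  rcases ha with rfl | rfl
  · rcases hb with rfl | rfl
    · rcases hd with rfl | rfl <;> tauto
    · tauto
  · rcases hb with rfl | rfl
    · tauto
    · rcases hc with rfl | rfl <;> tauto

lemma edgesWithin_le_cliquesIn {n : ℕ} (Γ : SimpleGraph (Fin n)) (U : Finset (Fin n)) :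
    edgesWithin Γ ↑U ≤ (cliquesIn Γ 2 U).card := by
  classical
  set E : Set (Sym2 (Fin n)) := {e ∈ Γ.edgeSet | ∀ v ∈ e, v ∈ (↑U : Set (Fin n))} with hEdef
  have hfin : E.Finite := Set.toFinite _
  have h1 : edgesWithin Γ ↑U = hfin.toFinset.card := Set.ncard_eq_toFinset_card _ hfin
  rw [h1, ← Finset.card_image_of_injective _ pairFinset_inj]
  apply Finset.card_le_card
  intro s hs
  simp only [Finset.mem_image] at hs
  obtain ⟨e, he, rfl⟩ := hs
  rw [Set.Finite.mem_toFinset] at he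
  obtain ⟨hadj, hin⟩ := he
  induction' e using Sym2.ind with a b
  have hab : Γ.Adj a b := hadj
  rw [mem_cliquesIn]
  refine ⟨⟨?_, ?_⟩, ?_⟩
  · simp only [pairFinset, Sym2.lift_mk]
    intro x hx y hy hxy
    simp only [Finset.coe_insert, Finset.coe_singleton, Set.mem_insert_iff,
      Set.mem_singleton_iff] at hx hy
    rcases hx with rfl | rfl <;> rcases hy with rfl | rfl
    · exact absurd rfl hxy
    · exact hab
    · exact hab.symm
    · exact absurd rfl hxy
  · simp only [pairFinset, Sym2.lift_mk]
    exact Finset.card_pair hab.ne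
  · simp only [pairFinset, Sym2.lift_mk]
    intro x hx
    simp only [Finset.mem_insert, Finset.mem_singleton] at hx
    rcases hx with rfl | rfl
    · exact hin x (Sym2.mem_mk_left _ _)
    · exact hin x (Sym2.mem_mk_right _ _)

lemma two_mul_edgesWithin_le {n : ℕ} (Γ : SimpleGraph (Fin n)) [DecidableRel Γ.Adj]
    (U : Finset (Fin n)) :
    2 * edgesWithin Γ ↑U ≤ ∑ v ∈ U, (U.filter (Γ.Adj v)).card := by
  classical
  set E : Set (Sym2 (Fin n)) := {e ∈ Γ.edgeSet | ∀ v ∈ e, v ∈ (↑U : Set (Fin n))} with hEdef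
  have hfin : E.Finite := Set.toFinite _
  have h1 : edgesWithin Γ ↑U = hfin.toFinset.card := Set.ncard_eq_toFinset_card _ hfin
  rw [h1, ← Finset.card_sigma]
  refine Finset.mul_card_image_le_card_of_maps_to
    (f := fun p : Σ _ : Fin n, Fin n => s(p.1, p.2)) ?_ 2 ?_
  · rintro ⟨a, b⟩ hp
    rw [Finset.mem_sigma] at hp
    obtain ⟨haU, hb⟩ := hp
    rw [Finset.mem_filter] at hb
    rw [Set.Finite.mem_toFinset]
    refine ⟨hb.2, ?_⟩
    intro v hv
    rw [Sym2.mem_iff] at hv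
    rcases hv with rfl | rfl
    · exact haU
    · exact hb.1
  · intro e he
    rw [Set.Finite.mem_toFinset] at he
    obtain ⟨hadj, hin⟩ := he
    induction' e using Sym2.ind with a b
    have hab : Γ.Adj a b := hadj
    have haU : a ∈ U := hin a (Sym2.mem_mk_left _ _)
    have hbU : b ∈ U := hin b (Sym2.mem_mk_right _ _)
    have hsub : ({⟨a, b⟩, ⟨b, a⟩} : Finset (Σ _ : Fin n, Fin n)) ⊆
        Finset.filter (fun p => s(p.1, p.2) = s(a, b)) ((U.sigma fun v => U.filter (Γ.Adj v))) := by
      intro p hp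
      simp only [Finset.mem_insert, Finset.mem_singleton] at hp
      rcases hp with rfl | rfl <;>
        simp [Finset.mem_sigma, Finset.mem_filter, haU, hbU, hab, hab.symm, Sym2.eq_swap]
    have hne : (⟨a, b⟩ : Σ _ : Fin n, Fin n) ≠ ⟨b, a⟩ := by
      intro hcon
      have := congrArg Sigma.fst hcon
      exact hab.ne this
    calc 2 = ({⟨a, b⟩, ⟨b, a⟩} : Finset (Σ _ : Fin n, Fin n)).card := (Finset.card_pair hne).symm
    _ ≤ _ := Finset.card_le_card hsub

lemma LocallyDense.weaken {n : ℕ} {Γ : SimpleGraph (Fin n)} {ρ ρ' d : ℝ}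
    (h : LocallyDense Γ ρ d) (hρ : ρ ≤ ρ') : LocallyDense Γ ρ' d := by
  intro S hS
  exact h S (le_trans (mul_le_mul_of_nonneg_right hρ (Nat.cast_nonneg n)) hS)

lemma key_lemma (d : ℝ) (hd : 0 < d) :
    ∀ m : ℕ, 2 ≤ m → ∀ ρ₀ : ℝ, 0 < ρ₀ →
    ∃ ρ > (0 : ℝ), ∃ c > (0 : ℝ), ∃ N : ℕ, ∀ n ≥ N, ∀ Γ : SimpleGraph (Fin n),
      LocallyDense Γ ρ d → ∀ U : Finset (Fin n), ρ₀ * n ≤ (U.card : ℝ) →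
      c * (U.card : ℝ) ^ m ≤ ((cliquesIn Γ m U).card : ℝ) := by
  intro m hm
  induction m, hm using Nat.le_induction with
  | base =>
    intro ρ₀ hρ₀
    refine ⟨ρ₀, hρ₀, d / 4, by positivity, ⌈(2 : ℝ) / ρ₀⌉₊, ?_⟩
    intro n hn Γ hΓ U hU
    have hk2 : (2 : ℝ) ≤ (U.card : ℝ) := by
      have h1 : (2 : ℝ) / ρ₀ ≤ n := le_trans (Nat.le_ceil _) (Nat.cast_le.mpr hn)
      have := mul_le_mul_of_nonneg_left h1 hρ₀.le
      rw [mul_div_cancel₀ _ hρ₀.ne'] at this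
      linarith
    have hE := hΓ ↑U (by rw [Set.ncard_coe_finset]; exact hU)
    rw [Set.ncard_coe_finset] at hE
    have hA : (edgesWithin Γ ↑U : ℝ) ≤ ((cliquesIn Γ 2 U).card : ℝ) :=
      Nat.cast_le.mpr (edgesWithin_le_cliquesIn Γ U)
    rw [Nat.cast_choose_two] at hE
    nlinarith [hE, hA]
  | succ m hm ih =>
    intro ρ₀ hρ₀
    obtain ⟨ρ', hρ', c', hc', N', hIH⟩ := ih (d * ρ₀ / 4) (by positivity)
    refine ⟨min ρ' ρ₀, lt_min hρ' hρ₀, c' * (d / 4) ^ (m + 1) / (m + 1),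
      by positivity, max N' ⌈(2 : ℝ) / ρ₀⌉₊, ?_⟩
    intro n hn Γ hΓ U hU
    classical
    set k : ℝ := (U.card : ℝ) with hk
    have hk0 : (0 : ℝ) ≤ k := Nat.cast_nonneg _
    have hk2 : (2 : ℝ) ≤ k := by
      have h1 : (2 : ℝ) / ρ₀ ≤ n := le_trans (Nat.le_ceil _)
        (Nat.cast_le.mpr (le_trans (le_max_right _ _) hn))
      have := mul_le_mul_of_nonneg_left h1 hρ₀.le
      rw [mul_div_cancel₀ _ hρ₀.ne'] at this
      linarith
    have hE := hΓ ↑U (by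
      rw [Set.ncard_coe_finset]
      calc min ρ' ρ₀ * n ≤ ρ₀ * n :=
        mul_le_mul_of_nonneg_right (min_le_right _ _) (Nat.cast_nonneg n)
      _ ≤ _ := hU)
    rw [Set.ncard_coe_finset, Nat.cast_choose_two] at hE
    have hdeg : (2 : ℝ) * (edgesWithin Γ ↑U : ℝ) ≤
        ∑ v ∈ U, ((U.filter (Γ.Adj v)).card : ℝ) := by
      have := two_mul_edgesWithin_le Γ U
      push_cast
      exact_mod_cast Nat.cast_le.mpr this
    set W : Finset (Fin n) := U.filter (fun v => d * k / 4 ≤ ((U.filter (Γ.Adj v)).card : ℝ))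
      with hWdef
    have hsplit : ∑ v ∈ U, ((U.filter (Γ.Adj v)).card : ℝ) ≤
        (W.card : ℝ) * k + k * (d * k / 4) := by
      rw [← Finset.sum_filter_add_sum_filter_not U
        (fun v => d * k / 4 ≤ ((U.filter (Γ.Adj v)).card : ℝ))]
      have h1 : ∑ v ∈ W, ((U.filter (Γ.Adj v)).card : ℝ) ≤ (W.card : ℝ) * k := by
        calc ∑ v ∈ W, ((U.filter (Γ.Adj v)).card : ℝ) ≤ ∑ _v ∈ W, k := by
              apply Finset.sum_le_sum
              intro v _
              exact_mod_cast Nat.cast_le.mpr (Finset.card_le_card (Finset.filter_subset _ _))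
        _ = (W.card : ℝ) * k := by rw [Finset.sum_const, nsmul_eq_mul]
      have h2 : ∑ v ∈ U.filter (fun v => ¬ d * k / 4 ≤ ((U.filter (Γ.Adj v)).card : ℝ)),
          ((U.filter (Γ.Adj v)).card : ℝ) ≤ k * (d * k / 4) := by
        calc _ ≤ ∑ _v ∈ U.filter (fun v => ¬ d * k / 4 ≤ ((U.filter (Γ.Adj v)).card : ℝ)),
            (d * k / 4) := by
              apply Finset.sum_le_sum
              intro v hv
              rw [Finset.mem_filter] at hv
              exact le_of_not_ge hv.2
        _ = ((U.filter (fun v => ¬ d * k / 4 ≤ ((U.filter (Γ.Adj v)).card : ℝ))).card : ℝ)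
            * (d * k / 4) := by rw [Finset.sum_const, nsmul_eq_mul]
        _ ≤ k * (d * k / 4) := by
              apply mul_le_mul_of_nonneg_right _ (by positivity)
              exact_mod_cast Nat.cast_le.mpr (Finset.card_le_card (Finset.filter_subset _ _))
      linarith
    have hW : d * k / 4 ≤ (W.card : ℝ) := by
      have hWk : d * k * (k - 1) ≤ (W.card : ℝ) * k + k * (d * k / 4) := by
        nlinarith [hE, hdeg, hsplit]
      have hkpos : (0 : ℝ) < k := by linarith
      nlinarith [hWk]
    have hper : ∀ v ∈ W, c' * (d * k / 4) ^ m ≤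
        ((cliquesIn Γ m (U.filter (Γ.Adj v))).card : ℝ) := by
      intro v hv
      rw [hWdef, Finset.mem_filter] at hv
      have hcard : d * k / 4 ≤ ((U.filter (Γ.Adj v)).card : ℝ) := hv.2
      have happ := hIH n (le_trans (le_max_left _ _) hn) Γ
        (hΓ.weaken (min_le_left _ _)) (U.filter (Γ.Adj v)) (by
          calc d * ρ₀ / 4 * n = d / 4 * (ρ₀ * n) := by ring
          _ ≤ d / 4 * k := by
                apply mul_le_mul_of_nonneg_left hU (by positivity)
          _ = d * k / 4 := by ring
          _ ≤ _ := hcard)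
      calc c' * (d * k / 4) ^ m ≤ c' * ((U.filter (Γ.Adj v)).card : ℝ) ^ m := by
            apply mul_le_mul_of_nonneg_left _ hc'.le
            exact pow_le_pow_left₀ (by positivity) hcard m
      _ ≤ _ := happ
    set Q : Finset (Σ _ : Fin n, Finset (Fin n)) :=
      W.sigma (fun v => cliquesIn Γ m (U.filter (Γ.Adj v))) with hQdef
    have hQcard : (W.card : ℝ) * (c' * (d * k / 4) ^ m) ≤ (Q.card : ℝ) := by
      rw [hQdef, Finset.card_sigma]
      push_cast
      calc (W.card : ℝ) * (c' * (d * k / 4) ^ m)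
          = ∑ _v ∈ W, c' * (d * k / 4) ^ m := by rw [Finset.sum_const, nsmul_eq_mul]
      _ ≤ _ := Finset.sum_le_sum hper
    have hmap : Q.card ≤ (m + 1) * (cliquesIn Γ (m + 1) U).card := by
      refine Finset.card_le_mul_card_image_of_maps_to
        (f := fun p : Σ _ : Fin n, Finset (Fin n) => insert p.1 p.2) ?_ (m + 1) ?_
      · rintro ⟨v, s⟩ hp
        rw [hQdef, Finset.mem_sigma] at hp
        obtain ⟨hvW, hs⟩ := hp
        rw [mem_cliquesIn] at hs
        obtain ⟨hsclique, hssub⟩ := hs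
        have hadj : ∀ b ∈ s, Γ.Adj v b := fun b hb =>
          (Finset.mem_filter.mp (hssub hb)).2
        rw [mem_cliquesIn]
        constructor
        · exact hsclique.insert hadj
        · intro x hx
          rcases Finset.mem_insert.mp hx with rfl | hx
          · exact Finset.mem_of_mem_filter x hvW
          · exact (Finset.mem_filter.mp (hssub hx)).1
      · intro t ht
        rw [mem_cliquesIn] at ht
        have htcard : t.card = m + 1 := ht.1.2
        rw [← htcard]
        apply Finset.card_le_card_of_injOn (fun p => p.1)
        · rintro ⟨v, s⟩ hp
          rw [Finset.mem_coe, Finset.mem_filter] at hp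
          have h4 : insert v s = t := hp.2
          rw [← h4]
          exact Finset.mem_insert_self _ _
        · rintro ⟨v, s⟩ hp ⟨v', s'⟩ hp' hvv'
          simp only at hvv'
          subst hvv'
          simp only [Finset.mem_coe, Finset.mem_filter, hQdef, Finset.mem_sigma,
            mem_cliquesIn] at hp hp'
          have hvs : v ∉ s := by
            intro hcon
            exact Γ.irrefl (Finset.mem_filter.mp (hp.1.2.2 hcon)).2
          have hvs' : v ∉ s' := by
            intro hcon
            exact Γ.irrefl (Finset.mem_filter.mp (hp'.1.2.2 hcon)).2
          have h1 : insert v s = insert v s' := by rw [hp.2, hp'.2]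
          have h5 : s = s' := by
            have e1 : (insert v s).erase v = s := Finset.erase_insert hvs
            have e2 : (insert v s').erase v = s' := Finset.erase_insert hvs'
            rw [← e1, ← e2, h1]
          subst h5
          rfl
    have hring : c' * (d / 4) ^ (m + 1) * k ^ (m + 1) =
        (d * k / 4) * (c' * (d * k / 4) ^ m) := by
      rw [mul_assoc, ← mul_pow, show d / 4 * k = d * k / 4 by ring, pow_succ]
      ring
    have hposm : (0 : ℝ) < (m : ℝ) + 1 := by positivity
    rw [div_mul_eq_mul_div]
    push_cast
    rw [div_le_iff₀ hposm]
    have hstep1 : (d * k / 4) * (c' * (d * k / 4) ^ m) ≤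
        (W.card : ℝ) * (c' * (d * k / 4) ^ m) :=
      mul_le_mul_of_nonneg_right hW (by positivity)
    have hstep2 : (Q.card : ℝ) ≤ ((m : ℝ) + 1) * ((cliquesIn Γ (m + 1) U).card : ℝ) := by
      have h6 := hmap
      have : ((Q.card : ℕ) : ℝ) ≤ (((m + 1) * (cliquesIn Γ (m + 1) U).card : ℕ) : ℝ) :=
        Nat.cast_le.mpr h6
      push_cast at this
      linarith
    linarith [hring, hstep1, hQcard, hstep2]


/-- Proposition 2.7 / `prop:KNRS-conjecture for cliques`: for every
`m ≥ 2` and `d > 0` there are `ρ, c₀ > 0` such that every sufficiently large `n`-vertex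
`(ρ,d)`-dense graph contains at least `c₀ n^m` copies of `K_m`. -/
theorem locally_dense_clique_count (m : ℕ) (hm : 2 ≤ m) (d : ℝ) (hd : 0 < d) :
    ∃ ρ > (0 : ℝ), ∃ c₀ > (0 : ℝ), ∃ N : ℕ, ∀ n ≥ N, ∀ Γ : SimpleGraph (Fin n),
      LocallyDense Γ ρ d →
      c₀ * (n : ℝ) ^ m ≤
        ({s : Finset (Fin n) | s.card = m ∧ Γ.IsClique ↑s}.ncard : ℝ) := by
  obtain ⟨ρ, hρ, c, hc, N, hkey⟩ := key_lemma d hd m hm 1 one_pos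
  refine ⟨ρ, hρ, c, hc, N, ?_⟩
  intro n hn Γ hΓ
  have h := hkey n hn Γ hΓ Finset.univ (by
    simp [Finset.card_univ])
  have hset : {s : Finset (Fin n) | s.card = m ∧ Γ.IsClique ↑s} =
      ↑(cliquesIn Γ m Finset.univ) := by
    ext s
    simp only [Set.mem_setOf_eq, Finset.mem_coe, mem_cliquesIn, SimpleGraph.isNClique_iff]
    constructor
    · rintro ⟨h1, h2⟩; exact ⟨⟨h2, h1⟩, Finset.subset_univ s⟩
    · rintro ⟨⟨h2, h1⟩, -⟩; exact ⟨h1, h2⟩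
  rw [hset, Set.ncard_coe_finset]
  simpa [Finset.card_univ] using h
end

section
/- Let H be a graph and let d ∈ (0,1]. Then there exist ρ, c₀ > 0 such that for all sufficiently large n, for every n-vertex (ρ,d)-dense graph Γ, every ordering σ of V(H) and every colouring χ : E(Γ) → ℕ, there are at least c₀·n^{v(H)} copies of H in Γ whose colouring under χ is canonical with respect to σ. -/
set_option linter.unusedSectionVars false
set_option maxHeartbeats 1000000

/-- `f` is a canonical copy of `H` in `G` (coloured by `χ`) with respect to the
ordering `σ`: an injective homomorphism whose image is monochromatic, rainbow or
lexicographic w.r.t. `σ`. -/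
def IsCanonicalCopy {α V : Type*} (H : SimpleGraph α) (G : SimpleGraph V)
    (σ : α → ℕ) (χ : Sym2 V → ℕ) (f : α → V) : Prop :=
  Function.Injective f ∧ (∀ ⦃u v⦄, H.Adj u v → G.Adj (f u) (f v)) ∧
    ((∃ c, ∀ ⦃u v⦄, H.Adj u v → χ s(f u, f v) = c) ∨
     (∀ ⦃u v u' v'⦄, H.Adj u v → H.Adj u' v' →
        χ s(f u, f v) = χ s(f u', f v') → s(u, v) = s(u', v')) ∨
     (∃ φ : α → ℕ, Function.Injective φ ∧
        ∀ ⦃u v⦄, H.Adj u v → σ u < σ v → χ s(f u, f v) = φ u))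

set_option linter.unusedSectionVars false
set_option maxHeartbeats 1000000

open Finset

section Ramsey
open Classical in
/-- min-homogeneous sequence building -/
lemma minHomog (κ : Type) [Fintype κ] [Nonempty κ] (r : ℕ)
    (ih : ∀ k : ℕ, ∃ N : ℕ, ∀ {V : Type} [LinearOrder V] (f : Finset V → κ) (S : Finset V),
      N ≤ S.card → ∃ Y ⊆ S, k ≤ Y.card ∧
        ∀ A ⊆ Y, A.card = r → ∀ B ⊆ Y, B.card = r → f A = f B)
    (m : ℕ) :
    ∃ M : ℕ, ∀ {V : Type} [LinearOrder V] (f : Finset V → κ) (S : Finset V),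
      M ≤ S.card → ∃ (X : Finset V) (c : V → κ), X ⊆ S ∧ X.card = m ∧
        ∀ x ∈ X, ∀ A ⊆ X.filter (x < ·), A.card = r → f (insert x A) = c x := by
  induction m with
  | zero =>
    exact ⟨0, fun f S _ => ⟨∅, fun _ => Classical.arbitrary κ, by simp, by simp, by simp⟩⟩
  | succ m ihm =>
    obtain ⟨M, hM⟩ := ihm
    obtain ⟨N, hN⟩ := ih M
    refine ⟨N + 1, ?_⟩
    intro V _ f S hS
    have hSne : S.Nonempty := card_pos.mp (by omega)
    set x := S.min' hSne with hx
    have hxS : x ∈ S := S.min'_mem hSne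
    have hScard : N ≤ (S.erase x).card := by
      rw [card_erase_of_mem hxS]; omega
    obtain ⟨Z, hZS, hZcard, hZhom⟩ := hN (fun A => f (insert x A)) (S.erase x) hScard
    obtain ⟨X', c', hX'Z, hX'card, hX'prop⟩ := hM f Z hZcard
    have hxX' : x ∉ X' := fun h => (mem_erase.mp (hZS (hX'Z h))).1 rfl
    set c : V → κ := fun v => if v = x then
        (if h : ∃ A, A ⊆ Z ∧ A.card = r then f (insert x h.choose) else Classical.arbitrary κ)
      else c' v with hc
    refine ⟨insert x X', c, ?_, ?_, ?_⟩
    · intro y hy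
      rcases mem_insert.mp hy with rfl | hy
      · exact hxS
      · exact (erase_subset _ _) (hZS (hX'Z hy))
    · rw [card_insert_of_notMem hxX', hX'card]
    · intro y hy A hA hAcard
      rcases mem_insert.mp hy with rfl | hy
      · -- y = x
        have hAZ : A ⊆ Z := by
          intro a ha
          have := hA ha
          rcases mem_filter.mp this with ⟨hmem, _⟩
          rcases mem_insert.mp hmem with rfl | h
          · exact absurd (mem_filter.mp (hA ha)).2 (lt_irrefl _)
          · exact hX'Z h
        have hex : ∃ A, A ⊆ Z ∧ A.card = r := ⟨A, hAZ, hAcard⟩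
        have hcx : c x = f (insert x hex.choose) := by
          simp only [hc, if_pos rfl, dif_pos hex]
        rw [hcx]
        exact hZhom A hAZ hAcard hex.choose hex.choose_spec.1 hex.choose_spec.2
      · -- y ∈ X'
        have hyx : y ≠ x := fun h => hxX' (h ▸ hy)
        have hcy : c y = c' y := by simp [hc, hyx]
        rw [hcy]
        have hfil : (insert x X').filter (y < ·) ⊆ X'.filter (y < ·) := by
          intro a ha
          rcases mem_filter.mp ha with ⟨hmem, hlt⟩
          rcases mem_insert.mp hmem with h | h
          · subst h
            have hyS : y ∈ S := (erase_subset _ _) (hZS (hX'Z hy))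
            exact absurd hlt (not_lt.mpr (S.min'_le y hyS))
          · exact mem_filter.mpr ⟨h, hlt⟩
        exact hX'prop y hy A (hA.trans hfil) hAcard

/-- Finite hypergraph Ramsey theorem. -/
lemma hyperRamsey (κ : Type) [Fintype κ] [Nonempty κ] (r k : ℕ) :
    ∃ N : ℕ, ∀ {V : Type} [LinearOrder V] (f : Finset V → κ) (S : Finset V),
      N ≤ S.card → ∃ Y ⊆ S, k ≤ Y.card ∧
        ∀ A ⊆ Y, A.card = r → ∀ B ⊆ Y, B.card = r → f A = f B := by
  classical
  induction r generalizing k with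
  | zero =>
    refine ⟨k, fun f S hS => ⟨S, Finset.Subset.refl S, hS, ?_⟩⟩
    intro A _ hA B _ hB
    rw [card_eq_zero.mp hA, card_eq_zero.mp hB]
  | succ r ih =>
    obtain ⟨M, hM⟩ := minHomog κ r (fun k' => ih k') (Fintype.card κ * k)
    refine ⟨M, ?_⟩
    intro V _ f S hS
    obtain ⟨X, c, hXS, hXcard, hXprop⟩ := hM f S hS
    -- pigeonhole on c over X
    have hq : 0 < Fintype.card κ := Fintype.card_pos
    by_cases hk : k = 0
    · exact ⟨∅, by simp, by simp [hk], by simp⟩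
    have hcard : (Finset.univ : Finset κ).card * (k - 1) < X.card := by
      rw [hXcard, card_univ]
      have : k - 1 < k := by omega
      exact Nat.mul_lt_mul_of_pos_left this hq
    obtain ⟨γ, _, hγ⟩ := exists_lt_card_fiber_of_mul_lt_card_of_maps_to
      (f := c) (fun a _ => mem_univ (c a)) hcard
    set Y := X.filter (fun v => c v = γ) with hY
    refine ⟨Y, (filter_subset _ _).trans hXS, by omega, ?_⟩
    have key : ∀ B ⊆ Y, B.card = r + 1 → f B = γ := by
      intro B hBY hBcard
      have hBne : B.Nonempty := card_pos.mp (by omega)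
      set x := B.min' hBne with hxdef
      have hxB : x ∈ B := B.min'_mem hBne
      have hxY : x ∈ Y := hBY hxB
      have hBx : B.erase x ⊆ X.filter (x < ·) := by
        intro a ha
        rcases mem_erase.mp ha with ⟨hax, haB⟩
        refine mem_filter.mpr ⟨(mem_filter.mp (hBY haB)).1, lt_of_le_of_ne (B.min'_le a haB) (Ne.symm hax)⟩
      have hcard' : (B.erase x).card = r := by
        rw [card_erase_of_mem hxB, hBcard]; omega
      have := hXprop x (mem_filter.mp hxY).1 (B.erase x) hBx hcard'
      rw [insert_erase hxB] at this
      rw [this]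
      exact (mem_filter.mp hxY).2
    intro A hA hAcard B hB hBcard
    rw [key A hA hAcard, key B hB hBcard]

end Ramsey
open Finset

section Canon
variable {V : Type} [LinearOrder V]

/-- explicit quadruple as function `Fin 4 → V` -/
def qd (a b c d : V) : Fin 4 → V := fun i =>
  if i.val = 0 then a else if i.val = 1 then b else if i.val = 2 then c else d

@[simp] lemma qd_zero (a b c d : V) : qd a b c d 0 = a := rfl
@[simp] lemma qd_one (a b c d : V) : qd a b c d 1 = b := rfl
@[simp] lemma qd_two (a b c d : V) : qd a b c d 2 = c := rfl
@[simp] lemma qd_three (a b c d : V) : qd a b c d 3 = d := rfl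

lemma qd_strictMono {a b c d : V} (h1 : a < b) (h2 : b < c) (h3 : c < d) :
    StrictMono (qd a b c d) := by
  intro ⟨i, hi⟩ ⟨j, hj⟩ hij
  simp only [Fin.mk_lt_mk] at hij
  simp only [qd]
  interval_cases i <;> interval_cases j <;> simp_all <;>
    first
      | exact h1.trans h2
      | exact h2.trans h3
      | exact (h1.trans h2).trans h3

lemma qd_mem {X : Finset V} {a b c d : V} (ha : a ∈ X) (hb : b ∈ X) (hc : c ∈ X)
    (hd : d ∈ X) : ∀ i, qd a b c d i ∈ X := by
  intro ⟨i, hi⟩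
  simp only [qd]
  interval_cases i <;> simpa

/-- the equality-pattern of a colouring on a 4-element set -/
noncomputable def pat (χ' : V → V → ℕ) (A : Finset V) :
    (Fin 4 × Fin 4) → (Fin 4 × Fin 4) → Bool := fun p q =>
  if h : A.card = 4 then
    decide (χ' (A.orderEmbOfFin h p.1) (A.orderEmbOfFin h p.2)
      = χ' (A.orderEmbOfFin h q.1) (A.orderEmbOfFin h q.2))
  else true

lemma patInst (χ' : V → V → ℕ) (X : Finset V)
    (hom : ∀ A ⊆ X, A.card = 4 → ∀ B ⊆ X, B.card = 4 → pat χ' A = pat χ' B)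
    {a b c d a' b' c' d' : V}
    (ha : a ∈ X) (hb : b ∈ X) (hc : c ∈ X) (hd : d ∈ X)
    (ha' : a' ∈ X) (hb' : b' ∈ X) (hc' : c' ∈ X) (hd' : d' ∈ X)
    (h1 : a < b) (h2 : b < c) (h3 : c < d)
    (h1' : a' < b') (h2' : b' < c') (h3' : c' < d')
    (i j k l : Fin 4) :
    (χ' (qd a b c d i) (qd a b c d j) = χ' (qd a b c d k) (qd a b c d l)) ↔
    (χ' (qd a' b' c' d' i) (qd a' b' c' d' j) = χ' (qd a' b' c' d' k) (qd a' b' c' d' l)) := by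
  classical
  have key : ∀ (x y z w : V), x < y → y < z → z < w → x ∈ X → y ∈ X → z ∈ X → w ∈ X →
      ∃ (A : Finset V) (hA : A.card = 4), A ⊆ X ∧ A.orderEmbOfFin hA = qd x y z w := by
    intro x y z w g1 g2 g3 m1 m2 m3 m4
    have hmono := qd_strictMono g1 g2 g3
    have hcard : (Finset.univ.image (qd x y z w)).card = 4 := by
      rw [card_image_of_injective _ hmono.injective, card_univ, Fintype.card_fin]
    refine ⟨Finset.univ.image (qd x y z w), hcard, ?_, ?_⟩
    · intro t ht
      rcases mem_image.mp ht with ⟨i, _, rfl⟩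
      exact qd_mem m1 m2 m3 m4 i
    · exact (orderEmbOfFin_unique hcard (fun i => mem_image_of_mem _ (mem_univ i)) hmono).symm
  obtain ⟨A, hA, hAX, hAq⟩ := key a b c d h1 h2 h3 ha hb hc hd
  obtain ⟨B, hB, hBX, hBq⟩ := key a' b' c' d' h1' h2' h3' ha' hb' hc' hd'
  have := hom A hAX hA B hBX hB
  have h1 := congrFun (congrFun this (i, j)) (k, l)
  simp only [pat, dif_pos hA, dif_pos hB, hAq, hBq, decide_eq_decide] at h1
  exact h1

/-- canonical structure of a colouring on a finite set -/
def CanonOn (χ' : V → V → ℕ) (Y : Finset V) : Prop :=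
  (∀ u ∈ Y, ∀ v ∈ Y, ∀ u' ∈ Y, ∀ v' ∈ Y, u < v → u' < v' → χ' u v = χ' u' v')
  ∨ (∃ φ : V → ℕ, Set.InjOn φ Y ∧ ∀ u ∈ Y, ∀ v ∈ Y, u < v → χ' u v = φ u)
  ∨ (∃ φ : V → ℕ, Set.InjOn φ Y ∧ ∀ u ∈ Y, ∀ v ∈ Y, u < v → χ' u v = φ v)
  ∨ (∀ u ∈ Y, ∀ v ∈ Y, ∀ u' ∈ Y, ∀ v' ∈ Y, u < v → u' < v' →
      χ' u v = χ' u' v' → u = u' ∧ v = v')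

lemma CanonOn_subset {χ' : V → V → ℕ} {Y Y' : Finset V} (hsub : Y' ⊆ Y)
    (h : CanonOn χ' Y) : CanonOn χ' Y' := by
  rcases h with h | ⟨φ, hinj, hval⟩ | ⟨φ, hinj, hval⟩ | h
  · exact Or.inl fun u hu v hv u' hu' v' hv' => h u (hsub hu) v (hsub hv) u' (hsub hu') v' (hsub hv')
  · exact Or.inr (Or.inl ⟨φ, hinj.mono (coe_subset.mpr hsub), fun u hu v hv => hval u (hsub hu) v (hsub hv)⟩)
  · exact Or.inr (Or.inr (Or.inl ⟨φ, hinj.mono (coe_subset.mpr hsub), fun u hu v hv => hval u (hsub hu) v (hsub hv)⟩))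
  · exact Or.inr (Or.inr (Or.inr fun u hu v hv u' hu' v' hv' =>
      h u (hsub hu) v (hsub hv) u' (hsub hu') v' (hsub hv')))

end Canon
/-- Canonical Ramsey theorem (finite, ordered version). -/
lemma canonRamsey (k : ℕ) :
    ∃ R : ℕ, ∀ {V : Type} [LinearOrder V] (χ' : V → V → ℕ) (S : Finset V),
      R ≤ S.card → ∃ Y ⊆ S, k ≤ Y.card ∧ CanonOn χ' Y := by
  classical
  obtain ⟨R, hR⟩ := hyperRamsey ((Fin 4 × Fin 4) → (Fin 4 × Fin 4) → Bool) 4 (k + 6)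
  refine ⟨R, ?_⟩
  intro V _ χ' S hS
  obtain ⟨X₀, hX₀S, hX₀card, hom₀⟩ := hR (pat χ') S hS
  obtain ⟨X, hXX₀, hXcard⟩ := exists_subset_card_eq hX₀card
  have hom : ∀ A ⊆ X, A.card = 4 → ∀ B ⊆ X, B.card = 4 → pat χ' A = pat χ' B :=
    fun A hA hA4 B hB hB4 => hom₀ A (hA.trans hXX₀) hA4 B (hB.trans hXX₀) hB4
  set E := X.orderEmbOfFin hXcard with hE
  have hEmem : ∀ i, E i ∈ X := fun i => orderEmbOfFin_mem X hXcard i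
  -- key elements
  have h0 : (0:ℕ) < k+6 := by omega
  have h1 : (1:ℕ) < k+6 := by omega
  have h2 : (2:ℕ) < k+6 := by omega
  have h3 : (3:ℕ) < k+6 := by omega
  have h4 : (4:ℕ) < k+6 := by omega
  have h5 : (5:ℕ) < k+6 := by omega
  have hT : k+5 < k+6 := by omega
  set x0 := E ⟨0, h0⟩
  set x1 := E ⟨1, h1⟩
  set x2 := E ⟨2, h2⟩
  set x3 := E ⟨3, h3⟩
  set x4 := E ⟨4, h4⟩
  set x5 := E ⟨5, h5⟩
  set T := E ⟨k+5, hT⟩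
  have hlt : ∀ i j (hi : i < k+6) (hj : j < k+6), i < j → E ⟨i, hi⟩ < E ⟨j, hj⟩ :=
    fun i j hi hj hij => E.strictMono (by exact hij)
  have h01 : x0 < x1 := hlt 0 1 h0 h1 (by omega)
  have h12 : x1 < x2 := hlt 1 2 h1 h2 (by omega)
  have h23 : x2 < x3 := hlt 2 3 h2 h3 (by omega)
  have h34 : x3 < x4 := hlt 3 4 h3 h4 (by omega)
  have h45 : x4 < x5 := hlt 4 5 h4 h5 (by omega)
  set Y := X \ {x0, x1, T} with hYdef
  have hYX : Y ⊆ X := sdiff_subset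
  have hYS : Y ⊆ S := hYX.trans (hXX₀.trans hX₀S)
  have hYcard : k ≤ Y.card := by
    have hsub : {x0, x1, T} ⊆ X := by
      intro t ht
      simp only [mem_insert, mem_singleton] at ht
      rcases ht with rfl | rfl | rfl <;> exact hEmem _
    have hc3 : ({x0, x1, T} : Finset V).card ≤ 3 := by
      apply (card_insert_le _ _).trans
      have h2 := card_insert_le x1 ({T} : Finset V)
      simp only [card_singleton] at h2 ⊢
      omega
    have hcs : Y.card = X.card - ({x0, x1, T} : Finset V).card := by
      rw [hYdef]; exact card_sdiff_of_subset hsub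
    omega
  -- elements of Y are strictly between x1 and T
  have hx1Y : ∀ y ∈ Y, x1 < y := by
    intro y hy
    rcases mem_sdiff.mp hy with ⟨hyX, hyn⟩
    have : y ∈ Set.range E := by rw [range_orderEmbOfFin]; exact hyX
    obtain ⟨⟨i, hi⟩, rfl⟩ := this
    simp only [mem_insert, mem_singleton, not_or] at hyn
    have hi0 : i ≠ 0 := fun h => hyn.1 (by subst h; rfl)
    have hi1 : i ≠ 1 := fun h => hyn.2.1 (by subst h; rfl)
    exact hlt 1 i h1 hi (by omega)
  have hYT : ∀ y ∈ Y, y < T := by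
    intro y hy
    rcases mem_sdiff.mp hy with ⟨hyX, hyn⟩
    have : y ∈ Set.range E := by rw [range_orderEmbOfFin]; exact hyX
    obtain ⟨⟨i, hi⟩, rfl⟩ := this
    simp only [mem_insert, mem_singleton, not_or] at hyn
    have hiT : i ≠ k+5 := fun h => hyn.2.2 (by subst h; rfl)
    exact hlt i (k+5) hi hT (by omega)
  have hYmem : ∀ y ∈ Y, y ∈ X := fun y hy => hYX hy
  -- booleans
  set P : Prop := (χ' x1 x2 = χ' x1 x3) with hPdef
  set Q : Prop := (χ' x1 x3 = χ' x2 x3) with hQdef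
  -- global transfer lemmas
  have GP : ∀ s u v w : V, s ∈ X → u ∈ X → v ∈ X → w ∈ X → s < u → u < v → v < w →
      (χ' u v = χ' u w ↔ P) := by
    intro s u v w ms mu mv mw g1 g2 g3
    have := patInst χ' X hom ms mu mv mw (hEmem _) (hEmem _) (hEmem _) (hEmem _)
      g1 g2 g3 h01 h12 h23 1 2 1 3
    simpa only [qd_zero, qd_one, qd_two, qd_three] using this
  have GQ : ∀ s u v w : V, s ∈ X → u ∈ X → v ∈ X → w ∈ X → s < u → u < v → v < w →
      (χ' u w = χ' v w ↔ Q) := by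
    intro s u v w ms mu mv mw g1 g2 g3
    have := patInst χ' X hom ms mu mv mw (hEmem _) (hEmem _) (hEmem _) (hEmem _)
      g1 g2 g3 h01 h12 h23 1 3 2 3
    simpa only [qd_zero, qd_one, qd_two, qd_three] using this
  have GZ : ∀ s u v w : V, s ∈ X → u ∈ X → v ∈ X → w ∈ X → s < u → u < v → v < w →
      (χ' u v = χ' v w ↔ (χ' x1 x2 = χ' x2 x3)) := by
    intro s u v w ms mu mv mw g1 g2 g3
    have := patInst χ' X hom ms mu mv mw (hEmem _) (hEmem _) (hEmem _) (hEmem _)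
      g1 g2 g3 h01 h12 h23 1 2 2 3
    simpa only [qd_zero, qd_one, qd_two, qd_three] using this
  have GD1 : ∀ a b c d : V, a ∈ X → b ∈ X → c ∈ X → d ∈ X → a < b → b < c → c < d →
      (χ' a b = χ' c d ↔ (χ' x1 x2 = χ' x3 x4)) := by
    intro a b c d ma mb mc md g1 g2 g3
    have := patInst χ' X hom ma mb mc md (hEmem _) (hEmem _) (hEmem _) (hEmem _)
      g1 g2 g3 h12 h23 h34 0 1 2 3
    simpa only [qd_zero, qd_one, qd_two, qd_three] using this
  have GD2 : ∀ a b c d : V, a ∈ X → b ∈ X → c ∈ X → d ∈ X → a < b → b < c → c < d →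
      (χ' a c = χ' b d ↔ (χ' x1 x3 = χ' x2 x4)) := by
    intro a b c d ma mb mc md g1 g2 g3
    have := patInst χ' X hom ma mb mc md (hEmem _) (hEmem _) (hEmem _) (hEmem _)
      g1 g2 g3 h12 h23 h34 0 2 1 3
    simpa only [qd_zero, qd_one, qd_two, qd_three] using this
  have GD3 : ∀ a b c d : V, a ∈ X → b ∈ X → c ∈ X → d ∈ X → a < b → b < c → c < d →
      (χ' a d = χ' b c ↔ (χ' x1 x4 = χ' x2 x3)) := by
    intro a b c d ma mb mc md g1 g2 g3
    have := patInst χ' X hom ma mb mc md (hEmem _) (hEmem _) (hEmem _) (hEmem _)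
      g1 g2 g3 h12 h23 h34 0 3 1 2
    simpa only [qd_zero, qd_one, qd_two, qd_three] using this
  -- implications: each non-(min/max) coincidence forces P
  have impD1 : (χ' x1 x2 = χ' x3 x4) → P := by
    intro hD
    have e2 : χ' x1 x2 = χ' x3 x5 :=
      (GD1 x1 x2 x3 x5 (hEmem _) (hEmem _) (hEmem _) (hEmem _) h12 h23 (h34.trans h45)).mpr hD
    exact (GP x0 x3 x4 x5 (hEmem _) (hEmem _) (hEmem _) (hEmem _)
      ((h01.trans h12).trans h23) h34 h45).mp (hD.symm.trans e2)
  have impD2 : (χ' x1 x3 = χ' x2 x4) → P := by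
    intro hD
    have e2 : χ' x1 x3 = χ' x2 x5 :=
      (GD2 x1 x2 x3 x5 (hEmem _) (hEmem _) (hEmem _) (hEmem _) h12 h23 (h34.trans h45)).mpr hD
    exact (GP x0 x2 x4 x5 (hEmem _) (hEmem _) (hEmem _) (hEmem _)
      (h01.trans h12) (h23.trans h34) h45).mp (hD.symm.trans e2)
  have impD3 : (χ' x1 x4 = χ' x2 x3) → P := by
    intro hD
    have e2 : χ' x1 x5 = χ' x2 x3 :=
      (GD3 x1 x2 x3 x5 (hEmem _) (hEmem _) (hEmem _) (hEmem _) h12 h23 (h34.trans h45)).mpr hD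
    exact (GP x0 x1 x4 x5 (hEmem _) (hEmem _) (hEmem _) (hEmem _)
      h01 (h12.trans (h23.trans h34)) h45).mp (hD.trans e2.symm)
  have impZ : (χ' x1 x2 = χ' x2 x3) → P := by
    intro hZ
    have e2 : χ' x1 x2 = χ' x2 x4 :=
      (GZ x0 x1 x2 x4 (hEmem _) (hEmem _) (hEmem _) (hEmem _) h01 h12 (h23.trans h34)).mpr hZ
    exact (GP x0 x2 x3 x4 (hEmem _) (hEmem _) (hEmem _) (hEmem _)
      (h01.trans h12) h23 h34).mp (hZ.symm.trans e2)
  refine ⟨Y, hYS, hYcard, ?_⟩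
  by_cases hP : P <;> by_cases hQ : Q
  · -- monochromatic
    left
    have claim1 : ∀ u ∈ Y, ∀ v ∈ Y, u < v → χ' u v = χ' x1 v := by
      intro u hu v hv huv
      exact ((GQ x0 x1 u v (hEmem _) (hEmem _) (hYmem u hu) (hYmem v hv)
        h01 (hx1Y u hu) huv).mpr hQ).symm
    have claim2 : ∀ v ∈ Y, ∀ v' ∈ Y, v < v' → χ' x1 v = χ' x1 v' := by
      intro v hv v' hv' hvv'
      exact (GP x0 x1 v v' (hEmem _) (hEmem _) (hYmem v hv) (hYmem v' hv')
        h01 (hx1Y v hv) hvv').mpr hP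
    intro u hu v hv u' hu' v' hv' huv hu'v'
    rcases lt_trichotomy v v' with h | h | h
    · rw [claim1 u hu v hv huv, claim1 u' hu' v' hv' hu'v', claim2 v hv v' hv' h]
    · rw [claim1 u hu v hv huv, claim1 u' hu' v' hv' hu'v', h]
    · rw [claim1 u hu v hv huv, claim1 u' hu' v' hv' hu'v', claim2 v' hv' v hv h]
  · -- min-lexicographic
    right; left
    refine ⟨fun y => χ' y T, ?_, ?_⟩
    · intro u hu u' hu' heq
      simp only [Finset.mem_coe] at hu hu'
      by_contra hne
      rcases lt_or_gt_of_ne hne with h | h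
      · exact hQ ((GQ x1 u u' T (hEmem _) (hYmem u hu) (hYmem u' hu') (hEmem _)
          (hx1Y u hu) h (hYT u' hu')).mp heq)
      · exact hQ ((GQ x1 u' u T (hEmem _) (hYmem u' hu') (hYmem u hu) (hEmem _)
          (hx1Y u' hu') h (hYT u hu)).mp heq.symm)
    · intro u hu v hv huv
      exact (GP x1 u v T (hEmem _) (hYmem u hu) (hYmem v hv) (hEmem _)
        (hx1Y u hu) huv (hYT v hv)).mpr hP
  · -- max-lexicographic
    right; right; left
    refine ⟨fun y => χ' x1 y, ?_, ?_⟩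
    · intro v hv v' hv' heq
      simp only [Finset.mem_coe] at hv hv'
      by_contra hne
      rcases lt_or_gt_of_ne hne with h | h
      · exact hP ((GP x0 x1 v v' (hEmem _) (hEmem _) (hYmem v hv) (hYmem v' hv')
          h01 (hx1Y v hv) h).mp heq)
      · exact hP ((GP x0 x1 v' v (hEmem _) (hEmem _) (hYmem v' hv') (hYmem v hv)
          h01 (hx1Y v' hv') h).mp heq.symm)
    · intro u hu v hv huv
      exact ((GQ x0 x1 u v (hEmem _) (hEmem _) (hYmem u hu) (hYmem v hv)
        h01 (hx1Y u hu) huv).mpr hQ).symm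
  · -- rainbow
    right; right; right
    intro u hu v hv u' hu' v' hv' huv hu'v' heq
    -- helper: no coincidence when first coordinates differ
    have main : ∀ a ∈ Y, ∀ b ∈ Y, ∀ c ∈ Y, ∀ e ∈ Y, a < b → c < e → a < c →
        χ' a b ≠ χ' c e := by
      intro a ha b hb c hc e he hab hce hac hcoin
      rcases eq_or_ne b e with rfl | hbe
      · -- shared max
        exact hQ ((GQ x1 a c b (hEmem _) (hYmem a ha) (hYmem c hc) (hYmem b hb)
          (hx1Y a ha) hac hce).mp hcoin)
      rcases lt_trichotomy b c with h | rfl | h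
      · -- disjoint  a<b<c<e
        exact hP (impD1 ((GD1 a b c e (hYmem a ha) (hYmem b hb) (hYmem c hc) (hYmem e he)
          hab h hce).mp hcoin))
      · -- b = c : path type
        exact hP (impZ ((GZ x1 a b e (hEmem _) (hYmem a ha) (hYmem b hb) (hYmem e he)
          (hx1Y a ha) hab hce).mp hcoin))
      · -- c < b
        rcases lt_trichotomy b e with h2 | rfl | h2
        · -- crossing a<c<b<e
          exact hP (impD2 ((GD2 a c b e (hYmem a ha) (hYmem c hc) (hYmem b hb) (hYmem e he)
            hac h h2).mp hcoin))
        · exact hbe rfl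
        · -- nested a<c<e<b
          exact hP (impD3 ((GD3 a c e b (hYmem a ha) (hYmem c hc) (hYmem e he) (hYmem b hb)
            hac hce h2).mp hcoin))
    rcases lt_trichotomy u u' with h | h | h
    · exact absurd heq (main u hu v hv u' hu' v' hv' huv hu'v' h)
    · subst h
      refine ⟨rfl, ?_⟩
      by_contra hne
      rcases lt_or_gt_of_ne hne with h2 | h2
      · exact hP ((GP x1 u v v' (hEmem _) (hYmem u hu) (hYmem v hv) (hYmem v' hv')
          (hx1Y u hu) huv h2).mp heq)
      · exact hP ((GP x1 u v' v (hEmem _) (hYmem u hu) (hYmem v' hv') (hYmem v hv)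
          (hx1Y u hu) hu'v' h2).mp heq.symm)
    · exact absurd heq.symm (main u' hu' v' hv' u hu v hv hu'v' huv h)
set_option maxHeartbeats 1000000
open Finset


open Classical in
/-- ordered tuples of clique vertices inside `S` -/
noncomputable def CliqT {n : ℕ} (Γ : SimpleGraph (Fin n)) (S : Finset (Fin n)) (R : ℕ) :
    Finset (Fin R → Fin n) :=
  univ.filter (fun g => (∀ i, g i ∈ S) ∧ Function.Injective g ∧
    ∀ i j, i ≠ j → Γ.Adj (g i) (g j))

/-- induced subgraph on a finset, as a graph on the same vertex type -/
def indG {n : ℕ} (Γ : SimpleGraph (Fin n)) (S : Finset (Fin n)) : SimpleGraph (Fin n) where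
  Adj x y := Γ.Adj x y ∧ x ∈ S ∧ y ∈ S
  symm := ⟨by rintro x y ⟨h, hx, hy⟩; exact ⟨h.symm, hy, hx⟩⟩
  loopless := ⟨by rintro x ⟨h, _, _⟩; exact Γ.irrefl h⟩

open Classical in
lemma handshake {n : ℕ} (Γ : SimpleGraph (Fin n)) (S : Finset (Fin n)) :
    ∑ v ∈ S, (S.filter (Γ.Adj v)).card = 2 * edgesWithin Γ ↑S := by
  classical
  have hdeg : ∀ v ∈ S, (indG Γ S).degree v = (S.filter (Γ.Adj v)).card := by
    intro v hv
    rw [SimpleGraph.degree]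
    congr 1
    ext w
    simp only [SimpleGraph.mem_neighborFinset, mem_filter]
    constructor
    · rintro ⟨h, _, hw⟩; exact ⟨hw, h⟩
    · rintro ⟨hw, h⟩; exact ⟨h, hv, hw⟩
  have hdeg0 : ∀ v ∉ S, (indG Γ S).degree v = 0 := by
    intro v hv
    rw [SimpleGraph.degree, Finset.card_eq_zero]
    ext w
    simp only [SimpleGraph.mem_neighborFinset, Finset.notMem_empty, iff_false]
    rintro ⟨_, hv', _⟩; exact hv hv'
  have hsum : ∑ v ∈ S, (S.filter (Γ.Adj v)).card = ∑ v, (indG Γ S).degree v := by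
    rw [← Finset.sum_subset (Finset.subset_univ S) (fun v _ hv => hdeg0 v hv)]
    exact Finset.sum_congr rfl (fun v hv => (hdeg v hv).symm)
  rw [hsum, SimpleGraph.sum_degrees_eq_twice_card_edges]
  congr 1
  have hset : (indG Γ S).edgeSet = {e ∈ Γ.edgeSet | ∀ v ∈ e, v ∈ (S : Set (Fin n))} := by
    ext e
    induction e with
    | _ x y =>
      simp only [SimpleGraph.mem_edgeSet, Set.mem_setOf_eq, Sym2.mem_iff, indG]
      constructor
      · rintro ⟨h, hx, hy⟩
        exact ⟨h, fun v hv => by rcases hv with rfl | rfl <;> simpa⟩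
      · rintro ⟨h, hmem⟩
        exact ⟨h, hmem x (Or.inl rfl), hmem y (Or.inr rfl)⟩
  have hew : edgesWithin Γ ↑S = (indG Γ S).edgeSet.ncard := by
    unfold edgesWithin
    rw [hset]
  rw [hew, Set.ncard_eq_toFinset_card', Set.toFinset_card]
  convert SimpleGraph.edgeFinset_card (G := indG Γ S)

open Classical in
lemma big_degrees {n : ℕ} (Γ : SimpleGraph (Fin n)) (S : Finset (Fin n)) (ρ d : ℝ)
    (hd0 : 0 < d) (hΓ : LocallyDense Γ ρ d) (hρS : ρ * n ≤ S.card) (h2 : 2 ≤ S.card) :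
    (d/4) * S.card ≤
      ((S.filter (fun v => (d/4) * S.card ≤ ((S.filter (Γ.Adj v)).card : ℝ))).card : ℝ) := by
  classical
  set m : ℝ := (S.card : ℝ) with hm
  have hm2 : (2:ℝ) ≤ m := by rw [hm]; exact_mod_cast h2
  have hm0 : 0 < m := by linarith
  have hdense := hΓ ↑S (by rwa [Set.ncard_coe_finset])
  rw [Set.ncard_coe_finset] at hdense
  have hchoose : (S.card.choose 2 : ℝ) = m * (m - 1) / 2 := by
    rw [Nat.cast_choose_two, hm]
  rw [hchoose] at hdense
  -- sum of degrees
  have hhs := handshake Γ S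
  have hsumlb : d * m * (m - 1) ≤ ∑ v ∈ S, ((S.filter (Γ.Adj v)).card : ℝ) := by
    have : (∑ v ∈ S, ((S.filter (Γ.Adj v)).card : ℝ)) =
        ((∑ v ∈ S, (S.filter (Γ.Adj v)).card : ℕ) : ℝ) := by push_cast; ring
    rw [this, hhs]
    push_cast
    calc d * m * (m-1) = 2 * (d * (m * (m - 1) / 2)) := by ring
    _ ≤ 2 * (edgesWithin Γ ↑S : ℝ) := by linarith
  set D := S.filter (fun v => (d/4) * S.card ≤ ((S.filter (Γ.Adj v)).card : ℝ)) with hD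
  have hsub : ∀ v ∈ S, ((S.filter (Γ.Adj v)).card : ℝ) ≤ m := by
    intro v _
    rw [hm]
    exact_mod_cast Nat.cast_le.mpr (card_le_card (filter_subset _ _))
  have hsumub : ∑ v ∈ S, ((S.filter (Γ.Adj v)).card : ℝ) ≤ (D.card : ℝ) * m + m * ((d/4) * m) := by
    rw [← Finset.sum_filter_add_sum_filter_not S
      (fun v => (d/4) * S.card ≤ ((S.filter (Γ.Adj v)).card : ℝ))]
    have hb1 : ∑ v ∈ D, ((S.filter (Γ.Adj v)).card : ℝ) ≤ (D.card : ℝ) * m := by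
      calc ∑ v ∈ D, ((S.filter (Γ.Adj v)).card : ℝ) ≤ ∑ _v ∈ D, m :=
            Finset.sum_le_sum (fun v hv => hsub v (mem_filter.mp hv).1)
      _ = (D.card : ℝ) * m := by rw [Finset.sum_const, nsmul_eq_mul]
    have hb2 : ∑ v ∈ S.filter (fun v => ¬ ((d/4) * S.card ≤ ((S.filter (Γ.Adj v)).card : ℝ))),
        ((S.filter (Γ.Adj v)).card : ℝ) ≤ m * ((d/4) * m) := by
      have : ∀ v ∈ S.filter (fun v => ¬ ((d/4) * S.card ≤ ((S.filter (Γ.Adj v)).card : ℝ))),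
          ((S.filter (Γ.Adj v)).card : ℝ) ≤ (d/4) * m := by
        intro v hv
        have := (mem_filter.mp hv).2
        rw [← hm] at this
        linarith [not_le.mp this]
      calc _ ≤ ∑ _v ∈ S.filter (fun v => ¬ ((d/4) * S.card ≤ ((S.filter (Γ.Adj v)).card : ℝ))),
            ((d/4) * m) := Finset.sum_le_sum this
      _ = ((S.filter (fun v => ¬ ((d/4) * S.card ≤ ((S.filter (Γ.Adj v)).card : ℝ)))).card : ℝ)
            * ((d/4) * m) := by rw [Finset.sum_const, nsmul_eq_mul]
      _ ≤ m * ((d/4) * m) := by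
          have hc : ((S.filter (fun v => ¬ ((d/4) * S.card ≤ ((S.filter (Γ.Adj v)).card : ℝ)))).card : ℝ) ≤ m := by
            rw [hm]; exact_mod_cast Nat.cast_le.mpr (card_le_card (filter_subset _ _))
          have hpos : (0:ℝ) ≤ (d/4) * m := by positivity
          exact mul_le_mul_of_nonneg_right hc hpos
    linarith
  -- combine: d m (m-1) ≤ |D| m + (d/4) m^2 ; m-1 ≥ m/2
  have hfin : d * m * (m - 1) ≤ (D.card : ℝ) * m + m * ((d/4) * m) := le_trans hsumlb hsumub
  have key : d * m * (m/2) ≤ (D.card : ℝ) * m + m * ((d/4) * m) := by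
    nlinarith [mul_nonneg (mul_nonneg hd0.le hm0.le) (show (0:ℝ) ≤ m - 1 - m/2 by linarith)]
  nlinarith [key, hm0]

lemma cliq_count (d ρ : ℝ) (hd0 : 0 < d) (hd1 : d ≤ 1) (R : ℕ) :
    ∃ c : ℝ, 0 < c ∧ ∀ n : ℕ, ∀ Γ : SimpleGraph (Fin n), LocallyDense Γ ρ d →
      2 ≤ ρ * n → ∀ S : Finset (Fin n), ρ * n ≤ (d/4)^R * S.card →
        c * (S.card : ℝ)^R ≤ ((CliqT Γ S R).card : ℝ) := by
  classical
  have hβ0 : 0 < d/4 := by linarith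
  have hβ1 : d/4 ≤ 1 := by linarith
  induction R with
  | zero =>
    refine ⟨1, one_pos, ?_⟩
    intro n Γ _ _ S _
    have hne : (CliqT Γ S 0).Nonempty := by
      refine ⟨fun i => i.elim0, ?_⟩
      rw [CliqT, mem_filter]
      exact ⟨mem_univ _, fun i => i.elim0, fun a => a.elim0, fun i => i.elim0⟩
    have := Finset.card_pos.mpr hne
    simp only [pow_zero, mul_one]
    exact_mod_cast this
  | succ R ih =>
    obtain ⟨c, hc0, hc⟩ := ih
    refine ⟨c * (d/4)^(R+1), by positivity, ?_⟩
    intro n Γ hΓ hρn S hρS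
    set β : ℝ := d/4 with hβ
    set m : ℝ := (S.card : ℝ) with hm
    have hm0 : 0 ≤ m := by positivity
    have hβRpos : (0:ℝ) < β^(R+1) := by positivity
    have hmρ : ρ * n ≤ m := by
      calc ρ * n ≤ β^(R+1) * m := hρS
      _ ≤ 1 * m := by
          apply mul_le_mul_of_nonneg_right _ hm0
          exact pow_le_one₀ (le_of_lt hβ0) hβ1
      _ = m := one_mul m
    have hm2 : (2:ℝ) ≤ m := le_trans hρn hmρ
    have h2 : 2 ≤ S.card := by rw [hm] at hm2; exact_mod_cast hm2
    -- big-degree vertices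
    have hD := big_degrees Γ S ρ d hd0 hΓ hmρ h2
    set D := S.filter (fun v => (d/4) * S.card ≤ ((S.filter (Γ.Adj v)).card : ℝ)) with hDdef
    -- each neighborhood supports many R-cliques
    set N : Fin n → Finset (Fin n) := fun v => S.filter (Γ.Adj v) with hN
    have hNv : ∀ v ∈ D, β * m ≤ ((N v).card : ℝ) := by
      intro v hv
      exact (mem_filter.mp hv).2
    have hNρ : ∀ v ∈ D, ρ * n ≤ β^R * ((N v).card : ℝ) := by
      intro v hv
      calc ρ * n ≤ β^(R+1) * m := hρS
      _ = β^R * (β * m) := by ring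
      _ ≤ β^R * ((N v).card : ℝ) := by
          apply mul_le_mul_of_nonneg_left (hNv v hv) (by positivity)
    have hIH : ∀ v ∈ D, c * (β * m)^R ≤ ((CliqT Γ (N v) R).card : ℝ) := by
      intro v hv
      calc c * (β * m)^R ≤ c * (((N v).card : ℝ))^R := by
            apply mul_le_mul_of_nonneg_left _ (le_of_lt hc0)
            exact pow_le_pow_left₀ (by positivity) (hNv v hv) R
      _ ≤ _ := hc n Γ hΓ hρn (N v) (hNρ v hv)
    -- build (R+1)-cliques by prepending v
    set B : Fin n → Finset (Fin (R+1) → Fin n) :=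
      fun v => (CliqT Γ (N v) R).image (fun g => Fin.cons v g) with hB
    have hBsub : D.biUnion B ⊆ CliqT Γ S (R+1) := by
      intro g' hg'
      rcases Finset.mem_biUnion.mp hg' with ⟨v, hv, hgB⟩
      rcases Finset.mem_image.mp hgB with ⟨g, hg, rfl⟩
      rw [CliqT, mem_filter] at hg ⊢
      obtain ⟨-, hgmem, hginj, hgadj⟩ := hg
      have hvS : v ∈ S := (mem_filter.mp hv).1
      have hAdjv : ∀ i, Γ.Adj v (g i) := fun i => (mem_filter.mp (hgmem i)).2
      refine ⟨mem_univ _, ?_, ?_, ?_⟩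
      · intro i
        refine Fin.cases ?_ ?_ i
        · simpa using hvS
        · intro j
          simpa using (mem_filter.mp (hgmem j)).1
      · apply Fin.cons_injective_of_injective _ hginj
        rintro ⟨i, rfl⟩
        exact (hAdjv i).ne' rfl
      · intro i j
        refine Fin.cases ?_ (fun i' => ?_) i <;> refine Fin.cases ?_ (fun j' => ?_) j <;>
          intro hij
        · exact absurd rfl hij
        · simpa using hAdjv j'
        · simpa using (hAdjv i').symm
        · have hne : i' ≠ j' := fun h => hij (by rw [h])
          simpa using hgadj i' j' hne
    have hdisj : ∀ v ∈ D, ∀ w ∈ D, v ≠ w → Disjoint (B v) (B w) := by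
      intro v _ w _ hvw
      rw [Finset.disjoint_left]
      intro g hgv hgw
      rcases Finset.mem_image.mp hgv with ⟨g1, _, rfl⟩
      rcases Finset.mem_image.mp hgw with ⟨g2, _, heq⟩
      apply hvw
      have := congrFun heq 0
      simpa using this.symm
    have hcard : ∑ v ∈ D, (CliqT Γ (N v) R).card ≤ (CliqT Γ S (R+1)).card := by
      have h1 : (D.biUnion B).card = ∑ v ∈ D, (B v).card := Finset.card_biUnion hdisj
      have h2 : ∀ v, (B v).card = (CliqT Γ (N v) R).card := fun v =>
        Finset.card_image_of_injective _ (fun g₁ g₂ h => funext fun i => by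
          have := congrFun h i.succ; simpa using this)
      calc ∑ v ∈ D, (CliqT Γ (N v) R).card = ∑ v ∈ D, (B v).card := by
            exact Finset.sum_congr rfl (fun v _ => (h2 v).symm)
      _ = (D.biUnion B).card := h1.symm
      _ ≤ _ := card_le_card hBsub
    have hfac : (0:ℝ) ≤ c * (β*m)^R := by positivity
    have hDm : β * m ≤ (D.card : ℝ) := by rw [hβ, hm]; exact hD
    calc c * β^(R+1) * m^(R+1) = (β*m) * (c*(β*m)^R) := by ring
    _ ≤ (D.card:ℝ) * (c*(β*m)^R) := mul_le_mul_of_nonneg_right hDm hfac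
    _ = ∑ _v ∈ D, (c*(β*m)^R) := by rw [Finset.sum_const, nsmul_eq_mul]
    _ ≤ ∑ v ∈ D, ((CliqT Γ (N v) R).card:ℝ) := Finset.sum_le_sum hIH
    _ = ((∑ v ∈ D, (CliqT Γ (N v) R).card : ℕ):ℝ) := by push_cast; ring
    _ ≤ ((CliqT Γ S (R+1)).card : ℝ) := by exact_mod_cast hcard

open Classical in
/-- From a clique and a canonically-coloured subset of exact size, build a canonical copy. -/
lemma exists_canonical_in_clique {α : Type*} [Fintype α] (H : SimpleGraph α)
    {n : ℕ} (Γ : SimpleGraph (Fin n)) (σ : α → ℕ) (hσ : Function.Injective σ)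
    (χ : Sym2 (Fin n) → ℕ) (A : Finset (Fin n))
    (hclique : ∀ x ∈ A, ∀ y ∈ A, x ≠ y → Γ.Adj x y)
    (Y' : Finset (Fin n)) (hY'A : Y' ⊆ A) (hY'k : Y'.card = Fintype.card α)
    (hcan : CanonOn (fun x y => χ s(x, y)) Y') :
    ∃ f : α → Fin n, IsCanonicalCopy H Γ σ χ f ∧ ∀ a, f a ∈ A := by
  classical
  have hswap : ∀ x y : Fin n, χ s(x, y) = χ s(y, x) := fun x y => by rw [Sym2.eq_swap]
  -- the order-isomorphism between α (ordered by σ) and Fin k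
  set t : Finset ℕ := Finset.univ.image σ with ht
  have htcard : t.card = Fintype.card α := by
    rw [ht, Finset.card_image_of_injective _ hσ, Finset.card_univ]
  set eσ := t.orderIsoOfFin htcard with heσ
  have hmemt : ∀ a : α, σ a ∈ t := fun a => Finset.mem_image_of_mem σ (Finset.mem_univ a)
  set idx : α → Fin (Fintype.card α) := fun a => eσ.symm ⟨σ a, hmemt a⟩ with hidx
  have hidxlt : ∀ a b : α, σ a < σ b ↔ idx a < idx b := by
    intro a b
    rw [hidx]
    rw [show (σ a < σ b) ↔ ((⟨σ a, hmemt a⟩ : ↥t) < ⟨σ b, hmemt b⟩) from Iff.rfl.symm]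
    exact (OrderIso.lt_iff_lt eσ.symm).symm
  have hidxinj : Function.Injective idx := by
    intro a b h
    apply hσ
    have h' : eσ (eσ.symm ⟨σ a, hmemt a⟩) = eσ (eσ.symm ⟨σ b, hmemt b⟩) := congrArg eσ h
    rw [OrderIso.apply_symm_apply, OrderIso.apply_symm_apply] at h'
    exact congrArg Subtype.val h'
  set EY := Y'.orderEmbOfFin hY'k with hEY
  have hEYmem : ∀ i, EY i ∈ Y' := fun i => Finset.orderEmbOfFin_mem _ _ _
  rcases hcan with hmono | ⟨φh, hφinj, hφval⟩ | ⟨φh, hφinj, hφval⟩ | hrb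
  · -- monochromatic
    set f : α → Fin n := fun a => EY (idx a) with hf
    have hfmem : ∀ a, f a ∈ Y' := fun a => hEYmem _
    have hfinj : Function.Injective f := fun a b h => hidxinj (EY.injective h)
    have hfne : ∀ {u v : α}, H.Adj u v → f u ≠ f v := fun huv h => huv.ne (hfinj h)
    have hhom : ∀ ⦃u v : α⦄, H.Adj u v → Γ.Adj (f u) (f v) := fun u v huv =>
      hclique _ (hY'A (hfmem u)) _ (hY'A (hfmem v)) (hfne huv)
    have aux : ∀ x ∈ Y', ∀ y ∈ Y', x ≠ y → ∀ x' ∈ Y', ∀ y' ∈ Y', x' ≠ y' →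
        χ s(x, y) = χ s(x', y') := by
      intro x hx y hy hxy x' hx' y' hy' hxy'
      rcases lt_or_gt_of_ne hxy with h | h <;> rcases lt_or_gt_of_ne hxy' with h' | h'
      · exact hmono x hx y hy x' hx' y' hy' h h'
      · rw [hswap x' y']; exact hmono x hx y hy y' hy' x' hx' h h'
      · rw [hswap x y]; exact hmono y hy x hx x' hx' y' hy' h h'
      · rw [hswap x y, hswap x' y']; exact hmono y hy x hx y' hy' x' hx' h h'
    refine ⟨f, ⟨hfinj, hhom, Or.inl ?_⟩, fun a => hY'A (hfmem a)⟩
    by_cases hE : ∃ u v : α, H.Adj u v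
    · obtain ⟨u₀, v₀, h₀⟩ := hE
      exact ⟨χ s(f u₀, f v₀), fun u v huv => aux _ (hfmem u) _ (hfmem v) (hfne huv)
        _ (hfmem u₀) _ (hfmem v₀) (hfne h₀)⟩
    · exact ⟨0, fun u v huv => absurd ⟨u, v, huv⟩ hE⟩
  · -- min-lexicographic
    set f : α → Fin n := fun a => EY (idx a) with hf
    have hfmem : ∀ a, f a ∈ Y' := fun a => hEYmem _
    have hfinj : Function.Injective f := fun a b h => hidxinj (EY.injective h)
    have hfne : ∀ {u v : α}, H.Adj u v → f u ≠ f v := fun huv h => huv.ne (hfinj h)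
    have hhom : ∀ ⦃u v : α⦄, H.Adj u v → Γ.Adj (f u) (f v) := fun u v huv =>
      hclique _ (hY'A (hfmem u)) _ (hY'A (hfmem v)) (hfne huv)
    refine ⟨f, ⟨hfinj, hhom, Or.inr (Or.inr ⟨φh ∘ f, ?_, ?_⟩)⟩, fun a => hY'A (hfmem a)⟩
    · intro a b h
      exact hfinj (hφinj (Finset.mem_coe.mpr (hfmem a)) (Finset.mem_coe.mpr (hfmem b)) h)
    · intro u v huv hlt
      have hflt : f u < f v := EY.strictMono ((hidxlt u v).mp hlt)
      exact hφval (f u) (hfmem u) (f v) (hfmem v) hflt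
  · -- max-lexicographic: embed in reverse order
    set f : α → Fin n := fun a => EY (Fin.rev (idx a)) with hf
    have hfmem : ∀ a, f a ∈ Y' := fun a => hEYmem _
    have hfinj : Function.Injective f := fun a b h =>
      hidxinj (Fin.rev_injective (EY.injective h))
    have hfne : ∀ {u v : α}, H.Adj u v → f u ≠ f v := fun huv h => huv.ne (hfinj h)
    have hhom : ∀ ⦃u v : α⦄, H.Adj u v → Γ.Adj (f u) (f v) := fun u v huv =>
      hclique _ (hY'A (hfmem u)) _ (hY'A (hfmem v)) (hfne huv)
    refine ⟨f, ⟨hfinj, hhom, Or.inr (Or.inr ⟨φh ∘ f, ?_, ?_⟩)⟩, fun a => hY'A (hfmem a)⟩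
    · intro a b h
      exact hfinj (hφinj (Finset.mem_coe.mpr (hfmem a)) (Finset.mem_coe.mpr (hfmem b)) h)
    · intro u v huv hlt
      have hflt : f v < f u := by
        apply EY.strictMono
        exact Fin.rev_lt_rev.mpr ((hidxlt u v).mp hlt)
      calc χ s(f u, f v) = χ s(f v, f u) := hswap _ _
      _ = φh (f u) := hφval (f v) (hfmem v) (f u) (hfmem u) hflt
  · -- rainbow
    set f : α → Fin n := fun a => EY (idx a) with hf
    have hfmem : ∀ a, f a ∈ Y' := fun a => hEYmem _
    have hfinj : Function.Injective f := fun a b h => hidxinj (EY.injective h)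
    have hfne : ∀ {u v : α}, H.Adj u v → f u ≠ f v := fun huv h => huv.ne (hfinj h)
    have hhom : ∀ ⦃u v : α⦄, H.Adj u v → Γ.Adj (f u) (f v) := fun u v huv =>
      hclique _ (hY'A (hfmem u)) _ (hY'A (hfmem v)) (hfne huv)
    refine ⟨f, ⟨hfinj, hhom, Or.inr (Or.inl ?_)⟩, fun a => hY'A (hfmem a)⟩
    intro u v u' v' huv hu'v' heq
    rcases lt_or_gt_of_ne (hfne huv) with h | h <;>
      rcases lt_or_gt_of_ne (hfne hu'v') with h' | h'
    · obtain ⟨e1, e2⟩ := hrb (f u) (hfmem u) (f v) (hfmem v) (f u') (hfmem u')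
        (f v') (hfmem v') h h' heq
      rw [hfinj e1, hfinj e2]
    · obtain ⟨e1, e2⟩ := hrb (f u) (hfmem u) (f v) (hfmem v) (f v') (hfmem v')
        (f u') (hfmem u') h h' (heq.trans (hswap _ _))
      rw [hfinj e1, hfinj e2]
      exact Sym2.eq_swap
    · obtain ⟨e1, e2⟩ := hrb (f v) (hfmem v) (f u) (hfmem u) (f u') (hfmem u')
        (f v') (hfmem v') h h' ((hswap _ _).symm.trans heq)
      rw [← hfinj e1, ← hfinj e2]
      exact Sym2.eq_swap
    · obtain ⟨e1, e2⟩ := hrb (f v) (hfmem v) (f u) (hfmem u) (f v') (hfmem v')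
        (f u') (hfmem u') h h' (((hswap _ _).symm.trans heq).trans (hswap _ _))
      rw [hfinj e1, hfinj e2]


/-- Lemma 4.3 / `lem:supersaturation-type`, canonical
supersaturation: for any graph `H` and `d ∈ (0,1]` there are `ρ, c₀ > 0` such that any
colouring of a sufficiently large `n`-vertex `(ρ,d)`-dense graph contains at least
`c₀ n^{v(H)}` canonical copies of `H` w.r.t. any given ordering `σ`. -/
theorem canonical_supersaturation {α : Type*} [Fintype α] (H : SimpleGraph α)
    (d : ℝ) (hd0 : 0 < d) (hd1 : d ≤ 1) :
    ∃ ρ > (0 : ℝ), ∃ c₀ > (0 : ℝ), ∃ N : ℕ, ∀ n ≥ N, ∀ Γ : SimpleGraph (Fin n),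
      LocallyDense Γ ρ d → ∀ σ : α → ℕ, Function.Injective σ →
        ∀ χ : Sym2 (Fin n) → ℕ,
          c₀ * (n : ℝ) ^ (Fintype.card α) ≤
            ({f : α → Fin n | IsCanonicalCopy H Γ σ χ f}.ncard : ℝ) := by

  classical
  set k := Fintype.card α with hk
  obtain ⟨R₀, hR₀⟩ := canonRamsey k
  set R := max R₀ (k + 1) with hRdef
  have hkR : k ≤ R := by omega
  have hRpos : 0 < R := by omega
  have hβ0 : (0:ℝ) < d/4 := by linarith
  set ρ : ℝ := (d/4)^R / 2 with hρdef
  have hρ0 : 0 < ρ := by rw [hρdef]; positivity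
  obtain ⟨c, hc0, hcc⟩ := cliq_count d ρ hd0 hd1 R
  have hRR : (0:ℝ) < (R:ℝ)^R := pow_pos (by exact_mod_cast hRpos) R
  refine ⟨ρ, hρ0, c / (R:ℝ)^R, div_pos hc0 hRR, ⌈(2:ℝ)/ρ⌉₊ + 1, ?_⟩
  intro n hn Γ hΓ σ hσ χ
  have hn2 : (2:ℝ) ≤ ρ * n := by
    have h1 : ((⌈(2:ℝ)/ρ⌉₊ : ℝ)) ≤ (n:ℝ) := by
      exact_mod_cast le_trans (Nat.le_succ _) hn
    have h2 : (2:ℝ)/ρ ≤ (n:ℝ) := le_trans (Nat.le_ceil _) h1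
    calc (2:ℝ) = ρ * (2/ρ) := by field_simp
    _ ≤ ρ * n := mul_le_mul_of_nonneg_left h2 hρ0.le
  have hn1 : 1 ≤ n := by omega
  have hnR : (0:ℝ) < (n:ℝ) := by exact_mod_cast hn1
  -- Step A : many clique tuples
  have hA : c * (n:ℝ)^R ≤ ((CliqT Γ Finset.univ R).card : ℝ) := by
    have hhyp : ρ * (n:ℝ) ≤ (d/4)^R * ((Finset.univ : Finset (Fin n)).card : ℝ) := by
      rw [Finset.card_univ, Fintype.card_fin, hρdef]
      have hp : (0:ℝ) ≤ (d/4)^R := by positivity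
      nlinarith [hnR.le]
    have happ := hcc n Γ hΓ hn2 Finset.univ hhyp
    rwa [Finset.card_univ, Fintype.card_fin] at happ
  set CS : Finset (Finset (Fin n)) := Finset.univ.filter
    (fun A => A.card = R ∧ ∀ x ∈ A, ∀ y ∈ A, x ≠ y → Γ.Adj x y) with hCSdef
  set CF : Finset (α → Fin n) := Finset.univ.filter
    (fun f => IsCanonicalCopy H Γ σ χ f) with hCFdef
  -- Step B : tuples vs clique sets
  have hB : (CliqT Γ Finset.univ R).card ≤ R^R * CS.card := by
    have hfib : ∀ A ∈ (CliqT Γ Finset.univ R).image (fun g => Finset.univ.image g),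
        ((CliqT Γ Finset.univ R).filter (fun g => Finset.univ.image g = A)).card ≤ R^R := by
      intro A hA'
      obtain ⟨g₀, hg₀, rfl⟩ := Finset.mem_image.mp hA'
      have hg₀inj : Function.Injective g₀ := by
        rw [CliqT, Finset.mem_filter] at hg₀
        exact hg₀.2.2.1
      have hAcard : (Finset.univ.image g₀).card = R := by
        rw [Finset.card_image_of_injective _ hg₀inj, Finset.card_univ, Fintype.card_fin]
      have hmap : ∀ g ∈ (CliqT Γ Finset.univ R).filter
          (fun g => Finset.univ.image g = Finset.univ.image g₀),
          ∀ i : Fin R, g i ∈ Finset.univ.image g₀ := by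
        intro g hg i
        have := (Finset.mem_filter.mp hg).2
        rw [← this]
        exact Finset.mem_image_of_mem g (Finset.mem_univ i)
      calc ((CliqT Γ Finset.univ R).filter
            (fun g => Finset.univ.image g = Finset.univ.image g₀)).card
          ≤ (Finset.univ : Finset (Fin R → ↥(Finset.univ.image g₀))).card := by
            set deflt : ↥(Finset.univ.image g₀) :=
              ⟨g₀ ⟨0, hRpos⟩, Finset.mem_image_of_mem _ (Finset.mem_univ _)⟩ with hdeflt
            apply Finset.card_le_card_of_injOn
              (fun g => fun i : Fin R =>
                if h : g i ∈ Finset.univ.image g₀ then (⟨g i, h⟩ : ↥(Finset.univ.image g₀))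
                else deflt)
            · intro g _
              exact Finset.mem_univ _
            · intro g hg g' hg' heq
              funext i
              have h1 := hmap g (Finset.mem_coe.mp hg) i
              have h2 := hmap g' (Finset.mem_coe.mp hg') i
              have hi := congrFun heq i
              simp only [dif_pos h1, dif_pos h2] at hi
              exact congrArg Subtype.val hi
      _ = R^R := by
            rw [Finset.card_univ, Fintype.card_fun, Fintype.card_coe, hAcard, Fintype.card_fin]
    have himg : (CliqT Γ Finset.univ R).image (fun g => Finset.univ.image g) ⊆ CS := by
      intro A hA'
      obtain ⟨g, hg, rfl⟩ := Finset.mem_image.mp hA'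
      rw [CliqT, Finset.mem_filter] at hg
      obtain ⟨-, -, hginj, hgadj⟩ := hg
      refine Finset.mem_filter.mpr ⟨Finset.mem_univ _, ?_, ?_⟩
      · rw [Finset.card_image_of_injective _ hginj, Finset.card_univ, Fintype.card_fin]
      · intro x hx y hy hxy
        obtain ⟨i, -, rfl⟩ := Finset.mem_image.mp hx
        obtain ⟨j, -, rfl⟩ := Finset.mem_image.mp hy
        exact hgadj i j (fun h => hxy (by rw [h]))
    calc (CliqT Γ Finset.univ R).card
        ≤ R^R * ((CliqT Γ Finset.univ R).image (fun g => Finset.univ.image g)).card :=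
          Finset.card_le_mul_card_image _ _ hfib
    _ ≤ R^R * CS.card := Nat.mul_le_mul_left _ (Finset.card_le_card himg)
  -- Step C : choose a canonical copy in each clique set
  have hF : ∀ A ∈ CS, ∃ f : α → Fin n, IsCanonicalCopy H Γ σ χ f ∧ ∀ a, f a ∈ A := by
    intro A hA'
    obtain ⟨hAcard, hAcliq⟩ := (Finset.mem_filter.mp hA').2
    obtain ⟨Y, hYA, hYk, hcan⟩ := hR₀ (fun x y => χ s(x, y)) A
      (by rw [hAcard, hRdef]; exact le_max_left _ _)
    obtain ⟨Y', hY'Y, hY'k⟩ := Finset.exists_subset_card_eq hYk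
    exact exists_canonical_in_clique H Γ σ hσ χ A hAcliq Y' (hY'Y.trans hYA) hY'k
      (CanonOn_subset hY'Y hcan)
  set F : Finset (Fin n) → (α → Fin n) := fun A =>
    if h : ∃ f : α → Fin n, IsCanonicalCopy H Γ σ χ f ∧ ∀ a, f a ∈ A then h.choose
    else fun _ => ⟨0, by omega⟩ with hFdef
  have hFprop : ∀ A ∈ CS, IsCanonicalCopy H Γ σ χ (F A) ∧ ∀ a, F A a ∈ A := by
    intro A hA'
    have h := hF A hA'
    rw [hFdef]
    simp only [dif_pos h]
    exact h.choose_spec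
  have hC : CS.card ≤ (n.choose (R - k)) * CF.card := by
    have hfib : ∀ f₀ ∈ CS.image F,
        (CS.filter (fun A => F A = f₀)).card ≤ n.choose (R - k) := by
      intro f₀ hf₀
      obtain ⟨A₀, hA₀, rfl⟩ := Finset.mem_image.mp hf₀
      have hf₀inj : Function.Injective (F A₀) := (hFprop A₀ hA₀).1.1
      set T := Finset.univ.image (F A₀) with hTdef
      have hTcard : T.card = k := by
        rw [hTdef, Finset.card_image_of_injective _ hf₀inj, Finset.card_univ]
      have hTsub : ∀ A ∈ CS.filter (fun A => F A = F A₀), T ⊆ A := by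
        intro A hA' x hx
        obtain ⟨a, -, rfl⟩ := Finset.mem_image.mp hx
        have h1 := (Finset.mem_filter.mp hA').2
        have h2 := ((hFprop A (Finset.mem_filter.mp hA').1).2) a
        rw [← h1]
        exact h2
      calc (CS.filter (fun A => F A = F A₀)).card
          ≤ (Finset.powersetCard (R - k) (Finset.univ : Finset (Fin n))).card := by
            apply Finset.card_le_card_of_injOn (fun A => A \ T)
            · intro A hA'
              have hsub := hTsub A hA'
              have hAcard : A.card = R :=
                ((Finset.mem_filter.mp (Finset.mem_filter.mp hA').1).2).1
              refine Finset.mem_powersetCard.mpr ⟨Finset.subset_univ _, ?_⟩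
              rw [Finset.card_sdiff_of_subset hsub, hAcard, hTcard]
            · intro A1 h1 A2 h2 heq
              have e1 : A1 = A1 \ T ∪ T := (Finset.sdiff_union_of_subset
                (hTsub A1 (Finset.mem_coe.mp h1))).symm
              have e2 : A2 = A2 \ T ∪ T := (Finset.sdiff_union_of_subset
                (hTsub A2 (Finset.mem_coe.mp h2))).symm
              have heq' : A1 \ T = A2 \ T := heq
              rw [e1, e2, heq']
      _ = n.choose (R - k) := by
            rw [Finset.card_powersetCard, Finset.card_univ, Fintype.card_fin]
    have himg : CS.image F ⊆ CF := by
      intro f hf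
      obtain ⟨A, hA', rfl⟩ := Finset.mem_image.mp hf
      exact Finset.mem_filter.mpr ⟨Finset.mem_univ _, (hFprop A hA').1⟩
    calc CS.card ≤ n.choose (R - k) * (CS.image F).card :=
          Finset.card_le_mul_card_image _ _ hfib
    _ ≤ n.choose (R - k) * CF.card := Nat.mul_le_mul_left _ (Finset.card_le_card himg)
  -- numeric conclusion
  have hCF0 : (0:ℝ) ≤ (CF.card : ℝ) := by positivity
  have hBR : ((CliqT Γ Finset.univ R).card : ℝ) ≤
      (R:ℝ)^R * ((n:ℝ)^(R-k) * (CF.card : ℝ)) := by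
    have h1 : ((CliqT Γ Finset.univ R).card : ℝ) ≤ (R:ℝ)^R * (CS.card : ℝ) := by
      exact_mod_cast hB
    have h2 : (CS.card : ℝ) ≤ ((n.choose (R - k)) : ℝ) * (CF.card : ℝ) := by
      exact_mod_cast hC
    have h3 : ((n.choose (R - k)) : ℝ) ≤ (n:ℝ)^(R-k) := by
      exact_mod_cast Nat.choose_le_pow n (R - k)
    calc ((CliqT Γ Finset.univ R).card : ℝ) ≤ (R:ℝ)^R * (CS.card : ℝ) := h1
    _ ≤ (R:ℝ)^R * (((n.choose (R - k)) : ℝ) * (CF.card : ℝ)) := by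
        apply mul_le_mul_of_nonneg_left h2 (le_of_lt hRR)
    _ ≤ (R:ℝ)^R * ((n:ℝ)^(R-k) * (CF.card : ℝ)) := by
        apply mul_le_mul_of_nonneg_left _ (le_of_lt hRR)
        exact mul_le_mul_of_nonneg_right h3 hCF0
  have hgoal : c / (R:ℝ)^R * (n:ℝ)^k ≤ (CF.card : ℝ) := by
    rw [div_mul_eq_mul_div, div_le_iff₀ hRR]
    have hnk : (0:ℝ) < (n:ℝ)^(R-k) := pow_pos hnR _
    apply le_of_mul_le_mul_right _ hnk
    calc c * (n:ℝ)^k * (n:ℝ)^(R-k) = c * (n:ℝ)^R := by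
          rw [mul_assoc, ← pow_add, Nat.add_sub_cancel' hkR]
    _ ≤ ((CliqT Γ Finset.univ R).card : ℝ) := hA
    _ ≤ (R:ℝ)^R * ((n:ℝ)^(R-k) * (CF.card : ℝ)) := hBR
    _ = (CF.card : ℝ) * (R:ℝ)^R * (n:ℝ)^(R-k) := by ring
  have hnc : ({f : α → Fin n | IsCanonicalCopy H Γ σ χ f}.ncard : ℕ) = CF.card := by
    rw [Set.ncard_eq_toFinset_card', Set.toFinset_setOf]
  rw [show ({f : α → Fin n | IsCanonicalCopy H Γ σ χ f}.ncard : ℝ) = (CF.card : ℝ) by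
    exact_mod_cast congrArg Nat.cast hnc]
  exact hgoal
end

section
/- Let H be a graph with at least two edges. For all d > 0 and every integer r ≥ 1, there exist ρ, γ, ε > 0 such that the following holds for all sufficiently large n. Let Γ be an n-vertex (ρ,d)-dense graph, let σ be an ordering of V(H), let L : E(Γ) → ℕ^r be a list assignment, let 𝓗 = 𝓗^σ_H(Γ,L) be the canonical copy hypergraph, and define 𝓕 := {W ⊆ V(𝓗) : e(G_W) ≥ (1−γ)·e(Γ)}. Then 𝓕 is (𝓗,ε)-abundant. -/
/-- The colouring `χ` of the edges of `H` is canonical w.r.t. the ordering `σ`: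
monochromatic, rainbow or lexicographic. -/
def IsCanonicalPattern {α : Type*} (H : SimpleGraph α) (σ : α → ℕ) (χ : Sym2 α → ℕ) : Prop :=
  (∃ c, ∀ e ∈ H.edgeSet, χ e = c) ∨
  (Set.InjOn χ H.edgeSet) ∨
  (∃ φ : α → ℕ, Function.Injective φ ∧ ∀ ⦃u v⦄, H.Adj u v → σ u < σ v → χ s(u, v) = φ u)

/-- The edge set of the canonical copy hypergraph `𝓗 = 𝓗^σ_H(Γ, L)` on the vertex set
`E(Γ) × [r]`. -/
def canHyperedges {α V : Type*} (H : SimpleGraph α) (Γ : SimpleGraph V) (σ : α → ℕ)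
    (r : ℕ) (L : Sym2 V → Fin r → ℕ) : Set (Set (Sym2 V × Fin r)) :=
  {E | ∃ (f : α → V) (t : Sym2 α → Fin r), Function.Injective f ∧
    (∀ ⦃u v⦄, H.Adj u v → Γ.Adj (f u) (f v)) ∧
    IsCanonicalPattern H σ (fun e => L (Sym2.map f e) (t e)) ∧
    E = (fun e => (Sym2.map f e, t e)) '' H.edgeSet}

/-- The edge set of the graph shadow `G_W ⊆ Γ` of a set `W ⊆ E(Γ) × [r]`. -/
def shadowEdges {V : Type*} (Γ : SimpleGraph V) (r : ℕ)
    (W : Set (Sym2 V × Fin r)) : Set (Sym2 V) :=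
  {e ∈ Γ.edgeSet | ∃ s : Fin r, (e, s) ∈ W}


open Finset


open Finset

section HyperRamsey

variable {κ : Type} [Fintype κ] [DecidableEq κ]

set_option linter.unusedSectionVars false in
/-- Auxiliary: prehomogeneous sequences for the induction step of hypergraph Ramsey. -/
private lemma preHom (u : ℕ)
    (IH : ∀ k : ℕ, ∃ m : ℕ, ∀ {V : Type} [LinearOrder V] (W : Finset V) (χ : Finset V → κ),
      m ≤ W.card → ∃ X, X ⊆ W ∧ X.card = k ∧ ∃ c0, ∀ S ⊆ X, S.card = u → χ S = c0) :
    ∀ j : ℕ, ∃ M : ℕ, ∀ {V : Type} [LinearOrder V] (W : Finset V) (χ : Finset V → κ),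
      M ≤ W.card → ∃ (X : Finset V) (cf : V → κ), X ⊆ W ∧ X.card = j ∧
        ∀ a ∈ X, ∀ S ⊆ X.filter (a < ·), S.card = u → χ (insert a S) = cf a := by
  intro j
  induction j with
  | zero =>
    refine ⟨0, ?_⟩
    intro V _ W χ _
    refine ⟨∅, fun _ => χ ∅, by simp, by simp, by simp⟩
  | succ j ihj =>
    obtain ⟨Mj, hMj⟩ := ihj
    obtain ⟨mj, hmj⟩ := IH Mj
    refine ⟨mj + 1, ?_⟩
    intro V _ W χ hW
    have hWne : W.Nonempty := card_pos.mp (by omega)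
    set a := W.min' hWne with ha
    have haW : a ∈ W := W.min'_mem hWne
    have hW' : mj ≤ (W.erase a).card := by
      rw [card_erase_of_mem haW]; omega
    obtain ⟨Y, hYW, hYcard, cA, hcA⟩ := hmj (W.erase a) (fun S => χ (insert a S)) hW'
    obtain ⟨X', cf', hX'Y, hX'card, hprop⟩ := hMj Y χ (le_of_eq hYcard.symm)
    have haX' : a ∉ X' := fun h => (mem_erase.mp (hYW (hX'Y h))).1 rfl
    refine ⟨insert a X', fun x => if x = a then cA else cf' x, ?_, ?_, ?_⟩
    · intro x hx
      rcases mem_insert.mp hx with h | h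
      · exact h ▸ haW
      · exact (erase_subset _ _) (hYW (hX'Y h))
    · rw [card_insert_of_notMem haX', hX'card]
    · intro b hb S hS hScard
      rcases mem_insert.mp hb with rfl | hbX'
      · simp only [if_pos rfl]
        refine hcA S ?_ hScard
        intro x hx
        have := hS hx
        rcases mem_filter.mp this with ⟨hxi, hax⟩
        rcases mem_insert.mp hxi with rfl | h
        · exact absurd hax (lt_irrefl _)
        · exact hX'Y h
      · have hba : b ≠ a := fun h => haX' (h ▸ hbX')
        simp only [if_neg hba]
        refine hprop b hbX' S ?_ hScard
        intro x hx
        rcases mem_filter.mp (hS hx) with ⟨hxi, hbx⟩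
        rcases mem_insert.mp hxi with rfl | h
        · -- x = a, but b < a contradicts a = min and b ∈ W
          exfalso
          have hbW : b ∈ W := (erase_subset _ _) (hYW (hX'Y hbX'))
          exact absurd (W.min'_le b hbW) (not_le.mpr hbx)
        · exact mem_filter.mpr ⟨h, hbx⟩

/-- Finite hypergraph Ramsey theorem: for every uniformity `u`, finite colour set `κ`
and target size `k` there is `m` such that every `κ`-colouring of the `u`-subsets of a
linearly ordered set of size at least `m` admits a homogeneous subset of size `k`. -/
theorem hyperRamsey_s11 (u : ℕ) :
    ∀ k : ℕ, ∃ m : ℕ, ∀ {V : Type} [LinearOrder V] (W : Finset V) (χ : Finset V → κ),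
      m ≤ W.card → ∃ X, X ⊆ W ∧ X.card = k ∧ ∃ c0, ∀ S ⊆ X, S.card = u → χ S = c0 := by
  induction u with
  | zero =>
    intro k
    refine ⟨k, ?_⟩
    intro V _ W χ hW
    obtain ⟨X, hXW, hXcard⟩ := exists_subset_card_eq hW
    refine ⟨X, hXW, hXcard, χ ∅, ?_⟩
    intro S _ hScard
    rw [card_eq_zero.mp hScard]
  | succ u IH =>
    intro k
    obtain ⟨M, hM⟩ := preHom u IH (Fintype.card κ * k + 1)
    refine ⟨M, ?_⟩
    intro V _ W χ hW
    obtain ⟨X, cf, hXW, hXcard, hprop⟩ := hM W χ hW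
    -- pigeonhole on cf
    have hXne : X.Nonempty := card_pos.mp (by omega)
    have hκne : (Finset.univ : Finset κ).Nonempty := by
      refine univ_nonempty_iff.mpr ⟨cf hXne.choose⟩
    obtain ⟨c0, _, hc0⟩ := exists_le_card_fiber_of_mul_le_card_of_maps_to
      (f := cf) (t := (univ : Finset κ)) (n := k) (fun a _ => mem_univ _) hκne
      (by rw [hXcard, Finset.card_univ]; omega)
    obtain ⟨Z, hZfib, hZcard⟩ := exists_subset_card_eq hc0
    refine ⟨Z, fun x hx => hXW (mem_filter.mp (hZfib hx)).1, hZcard, c0, ?_⟩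
    intro S hSZ hScard
    have hSne : S.Nonempty := card_pos.mp (by omega)
    set a := S.min' hSne with ha
    have haS : a ∈ S := S.min'_mem hSne
    have haZ : a ∈ Z := hSZ haS
    have haX : a ∈ X := (mem_filter.mp (hZfib haZ)).1
    have hcfa : cf a = c0 := (mem_filter.mp (hZfib haZ)).2
    have h1 : χ (insert a (S.erase a)) = cf a := by
      refine hprop a haX (S.erase a) ?_ (by rw [card_erase_of_mem haS, hScard]; omega)
      intro x hx
      refine mem_filter.mpr ⟨(mem_filter.mp (hZfib (hSZ (erase_subset _ _ hx)))).1, ?_⟩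
      exact S.min'_lt_of_mem_erase_min' hSne hx
    rw [insert_erase haS] at h1
    rw [h1, hcfa]

end HyperRamsey


section CanRamsey

/-- The equality pattern of a pair-colouring on a 4-element set. -/
noncomputable def patCR {V : Type} [LinearOrder V] (cc : Sym2 V → ℕ) (S : Finset V) :
    Sym2 (Fin 4) × Sym2 (Fin 4) → Bool :=
  if h : S.card = 4 then
    fun pq => decide (cc (Sym2.map (⇑(S.orderEmbOfFin h)) pq.1) =
      cc (Sym2.map (⇑(S.orderEmbOfFin h)) pq.2))
  else fun _ => false

private lemma sm4 {V : Type} [LinearOrder V] {a b c d : V} (hab : a < b) (hbc : b < c)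
    (hcd : c < d) : StrictMono (![a,b,c,d] : Fin 4 → V) := by
  have hac := hab.trans hbc; have hbd := hbc.trans hcd; have had := hac.trans hcd
  intro i j hij
  fin_cases i <;> fin_cases j <;> simp_all

private lemma card4 {V : Type} [LinearOrder V] {a b c d : V} (hab : a < b) (hbc : b < c)
    (hcd : c < d) : ({a,b,c,d} : Finset V).card = 4 := by
  have h1 : a ∉ ({b, c, d} : Finset V) := by
    simp [hab.ne, (hab.trans hbc).ne, (hab.trans (hbc.trans hcd)).ne]
  have h2 : b ∉ ({c, d} : Finset V) := by simp [hbc.ne, (hbc.trans hcd).ne]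
  have h3 : c ∉ ({d} : Finset V) := by simp [hcd.ne]
  rw [Finset.card_insert_of_notMem h1, Finset.card_insert_of_notMem h2,
    Finset.card_insert_of_notMem h3, Finset.card_singleton]

private lemma patCR_spec {V : Type} [LinearOrder V] (cc : Sym2 V → ℕ) {a b c d : V}
    (hab : a < b) (hbc : b < c) (hcd : c < d) (p q : Sym2 (Fin 4)) :
    patCR cc {a,b,c,d} (p, q) = true ↔
      (cc (Sym2.map (![a,b,c,d]) p) = cc (Sym2.map (![a,b,c,d]) q)) := by
  have h4 := card4 hab hbc hcd
  have hmem : ∀ x : Fin 4, (![a,b,c,d] : Fin 4 → V) x ∈ ({a,b,c,d} : Finset V) := by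
    intro x; fin_cases x <;> simp
  have hemb : (![a,b,c,d] : Fin 4 → V) = ⇑(({a,b,c,d} : Finset V).orderEmbOfFin h4) :=
    Finset.orderEmbOfFin_unique h4 hmem (sm4 hab hbc hcd)
  rw [patCR, dif_pos h4]
  simp only [← hemb, decide_eq_true_eq]

/-- The Erdős–Rado canonical Ramsey theorem (for `ℕ`-colourings of pairs, with
order-compatible canonical patterns). -/
theorem canRamsey (v : ℕ) :
    ∃ m : ℕ, v + 6 ≤ m ∧ ∀ {V : Type} [LinearOrder V] (Q : Finset V) (cc : Sym2 V → ℕ),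
      m ≤ Q.card → ∃ g : Fin v → V, StrictMono g ∧ (∀ i, g i ∈ Q) ∧
        ((∃ col, ∀ i j : Fin v, i < j → cc s(g i, g j) = col) ∨
         (∀ i j k l : Fin v, i < j → k < l →
            cc s(g i, g j) = cc s(g k, g l) → i = k ∧ j = l) ∨
         (∃ ψ : Fin v → ℕ, Function.Injective ψ ∧
            ∀ i j : Fin v, i < j → cc s(g i, g j) = ψ i) ∨
         (∃ ψ : Fin v → ℕ, Function.Injective ψ ∧
            ∀ i j : Fin v, i < j → cc s(g i, g j) = ψ j)) := by
  obtain ⟨m0, hm0⟩ := hyperRamsey_s11 (κ := Sym2 (Fin 4) × Sym2 (Fin 4) → Bool) 4 (v + 6)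
  refine ⟨max m0 (v + 6), le_max_right _ _, ?_⟩
  intro V _ Q cc hQ
  obtain ⟨X, hXQ, hXcard, P0, hhom⟩ := hm0 Q (patCR cc) (le_trans (le_max_left _ _) hQ)
  set y : Fin (v + 6) → V := ⇑(X.orderEmbOfFin hXcard) with hy_def
  have hy : StrictMono y := (X.orderEmbOfFin hXcard).strictMono
  have hymem : ∀ i, y i ∈ X := fun i => X.orderEmbOfFin_mem hXcard i
  set cp : Fin (v + 6) → Fin (v + 6) → ℕ := fun i j => cc s(y i, y j) with hcp_def
  -- the central homogeneity transfer
  have inst : ∀ (i1 i2 i3 i4 : Fin (v + 6)), i1 < i2 → i2 < i3 → i3 < i4 →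
      ∀ p q : Sym2 (Fin 4),
        (cc (Sym2.map (![y i1, y i2, y i3, y i4]) p) =
          cc (Sym2.map (![y i1, y i2, y i3, y i4]) q)) ↔ P0 (p, q) = true := by
    intro i1 i2 i3 i4 h12 h23 h34 p q
    have hab := hy h12; have hbc := hy h23; have hcd := hy h34
    have hsub : ({y i1, y i2, y i3, y i4} : Finset V) ⊆ X := by
      intro x hx
      simp only [mem_insert, mem_singleton] at hx
      rcases hx with rfl | rfl | rfl | rfl <;> exact hymem _
    have hP := hhom _ hsub (card4 hab hbc hcd)
    rw [← patCR_spec cc hab hbc hcd p q, hP]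
  -- six instances of the pattern
  have eqShareMin : ∀ {i j j' e : Fin (v + 6)}, i < j → j < j' → j' < e →
      (cp i j = cp i j' ↔ P0 (s(0,1), s(0,2)) = true) := by
    intro i j j' e h1 h2 h3
    simpa [Sym2.map_pair_eq] using inst i j j' e h1 h2 h3 s(0,1) s(0,2)
  have eqShareMax : ∀ {i i' j e : Fin (v + 6)}, i < i' → i' < j → j < e →
      (cp i j = cp i' j ↔ P0 (s(0,2), s(1,2)) = true) := by
    intro i i' j e h1 h2 h3
    simpa [Sym2.map_pair_eq] using inst i i' j e h1 h2 h3 s(0,2) s(1,2)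
  have eqChain : ∀ {i j l e : Fin (v + 6)}, i < j → j < l → l < e →
      (cp i j = cp j l ↔ P0 (s(0,1), s(1,2)) = true) := by
    intro i j l e h1 h2 h3
    simpa [Sym2.map_pair_eq] using inst i j l e h1 h2 h3 s(0,1) s(1,2)
  have eqDisj : ∀ {i j k l : Fin (v + 6)}, i < j → j < k → k < l →
      (cp i j = cp k l ↔ P0 (s(0,1), s(2,3)) = true) := by
    intro i j k l h1 h2 h3
    simpa [Sym2.map_pair_eq] using inst i j k l h1 h2 h3 s(0,1) s(2,3)
  have eqCross : ∀ {i k j l : Fin (v + 6)}, i < k → k < j → j < l →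
      (cp i j = cp k l ↔ P0 (s(0,2), s(1,3)) = true) := by
    intro i k j l h1 h2 h3
    simpa [Sym2.map_pair_eq] using inst i k j l h1 h2 h3 s(0,2) s(1,3)
  have eqNest : ∀ {i k l j : Fin (v + 6)}, i < k → k < l → l < j →
      (cp i j = cp k l ↔ P0 (s(0,3), s(1,2)) = true) := by
    intro i k l j h1 h2 h3
    simpa [Sym2.map_pair_eq] using inst i k l j h1 h2 h3 s(0,3) s(1,2)
  -- index bookkeeping
  have hvlt : ∀ i : Fin v, (i : ℕ) + 2 < v + 6 := fun i => by omega
  set pc : Fin v → Fin (v + 6) := fun i => ⟨(i : ℕ) + 2, hvlt i⟩ with hpc_def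
  have hpc : StrictMono pc := fun i j hij => by
    simp only [pc, Fin.mk_lt_mk]; exact Nat.add_lt_add_right hij 2
  set z1 : Fin (v + 6) := ⟨1, by omega⟩
  set t2 : Fin (v + 6) := ⟨v + 2, by omega⟩
  set t3 : Fin (v + 6) := ⟨v + 3, by omega⟩
  set t4 : Fin (v + 6) := ⟨v + 4, by omega⟩
  have hz1pc : ∀ i : Fin v, z1 < pc i := fun i => by
    simp only [z1, pc, Fin.mk_lt_mk]; omega
  have hpct2 : ∀ i : Fin v, pc i < t2 := fun i => by
    simp only [t2, pc, Fin.mk_lt_mk]; omega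
  have ht23 : t2 < t3 := by simp only [t2, t3, Fin.mk_lt_mk]; omega
  have ht34 : t3 < t4 := by simp only [t3, t4, Fin.mk_lt_mk]; omega
  set g : Fin v → V := fun i => y (pc i) with hg_def
  have hgQ : ∀ i, g i ∈ Q := fun i => hXQ (hymem (pc i))
  have hgmono : StrictMono g := fun i j hij => hy (hpc hij)
  have hgcp : ∀ i j : Fin v, cc s(g i, g j) = cp (pc i) (pc j) := fun i j => rfl
  refine ⟨g, hgmono, hgQ, ?_⟩
  by_cases b1 : P0 (s(0,1), s(0,2)) = true
  · -- colour depends only on the smaller endpoint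
    have depMin : ∀ i j : Fin v, i < j → cp (pc i) (pc j) = cp (pc i) t2 := by
      intro i j hij
      exact (eqShareMin (hpc hij) (hpct2 j) ht23).mpr b1
    by_cases b2 : P0 (s(0,2), s(1,2)) = true
    · -- monochromatic
      left
      refine ⟨cp z1 t2, ?_⟩
      intro i j hij
      rw [hgcp, depMin i j hij]
      exact ((eqShareMax (hz1pc i) (hpct2 i) ht23).mpr b2).symm
    · -- min-lexicographic
      right; right; left
      refine ⟨fun i => cp (pc i) t2, ?_, fun i j hij => by rw [hgcp]; exact depMin i j hij⟩
      have hne : ∀ i i' : Fin v, i < i' → cp (pc i) t2 ≠ cp (pc i') t2 := by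
        intro i i' hii' hcontr
        exact b2 ((eqShareMax (hpc hii') (hpct2 i') ht23).mp hcontr)
      intro i i' h
      by_contra hne'
      rcases lt_or_gt_of_ne hne' with hlt | hgt
      · exact hne i i' hlt h
      · exact hne i' i hgt h.symm
  · -- colour does not only depend on the smaller endpoint
    have flt : ∀ {a b : ℕ} (ha : a < v + 6) (hb : b < v + 6), a < b →
        (⟨a, ha⟩ : Fin (v + 6)) < ⟨b, hb⟩ := fun _ _ h => Fin.mk_lt_mk.mpr h
    set i0 : Fin (v + 6) := ⟨0, by omega⟩
    set i1 : Fin (v + 6) := ⟨1, by omega⟩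
    set i2 : Fin (v + 6) := ⟨2, by omega⟩
    set i3 : Fin (v + 6) := ⟨3, by omega⟩
    set i4 : Fin (v + 6) := ⟨4, by omega⟩
    set i5 : Fin (v + 6) := ⟨5, by omega⟩
    have h01 : i0 < i1 := flt _ _ (by omega)
    have h12 : i1 < i2 := flt _ _ (by omega)
    have h23 : i2 < i3 := flt _ _ (by omega)
    have h34 : i3 < i4 := flt _ _ (by omega)
    have h45 : i4 < i5 := flt _ _ (by omega)
    have h13 : i1 < i3 := h12.trans h23
    have h24 : i2 < i4 := h23.trans h34
    have h35 : i3 < i5 := h34.trans h45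
    have nb3 : ¬ P0 (s(0,1), s(1,2)) = true := by
      intro b3
      have e1 : cp i0 i1 = cp i1 i2 := (eqChain h01 h12 h23).mpr b3
      have e2 : cp i0 i1 = cp i1 i3 := (eqChain h01 h13 h34).mpr b3
      exact b1 ((eqShareMin h12 h23 h34).mp (e1.symm.trans e2))
    have nb4 : ¬ P0 (s(0,1), s(2,3)) = true := by
      intro b4
      have e1 : cp i0 i1 = cp i2 i3 := (eqDisj h01 h12 h23).mpr b4
      have e2 : cp i0 i1 = cp i2 i4 := (eqDisj h01 h12 h24).mpr b4
      exact b1 ((eqShareMin h23 h34 h45).mp (e1.symm.trans e2))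
    have nb5 : ¬ P0 (s(0,2), s(1,3)) = true := by
      intro b5
      have e1 : cp i0 i2 = cp i1 i3 := (eqCross h01 h12 h23).mpr b5
      have e2 : cp i0 i2 = cp i1 i4 := (eqCross h01 h12 h24).mpr b5
      exact b1 ((eqShareMin h13 h34 h45).mp (e1.symm.trans e2))
    have nb6 : ¬ P0 (s(0,3), s(1,2)) = true := by
      intro b6
      have h03 : i0 < i3 := h01.trans h13
      have e1 : cp i0 i3 = cp i1 i2 := (eqNest h01 h12 h23).mpr b6
      have e2 : cp i0 i4 = cp i1 i2 := (eqNest h01 h12 h24).mpr b6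
      exact b1 ((eqShareMin h03 h34 h45).mp (e1.trans e2.symm))
    by_cases b2 : P0 (s(0,2), s(1,2)) = true
    · -- max-lexicographic
      right; right; right
      have depMax : ∀ i j : Fin v, i < j → cp (pc i) (pc j) = cp z1 (pc j) := by
        intro i j hij
        exact ((eqShareMax (hz1pc i) (hpc hij) (hpct2 j)).mpr b2).symm
      refine ⟨fun j => cp z1 (pc j), ?_, fun i j hij => by rw [hgcp]; exact depMax i j hij⟩
      have hne : ∀ j j' : Fin v, j < j' → cp z1 (pc j) ≠ cp z1 (pc j') := by
        intro j j' hjj' hcontr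
        exact b1 ((eqShareMin (hz1pc j) (hpc hjj') (hpct2 j')).mp hcontr)
      intro j j' h
      by_contra hne'
      rcases lt_or_gt_of_ne hne' with hlt | hgt
      · exact hne j j' hlt h
      · exact hne j' j hgt h.symm
    · -- rainbow
      right; left
      have main2 : ∀ i j j' : Fin v, i < j → i < j' → j < j' →
          cp (pc i) (pc j) ≠ cp (pc i) (pc j') := by
        intro i j j' _ _ hjj' hcontr
        exact b1 ((eqShareMin (hpc ‹i < j›) (hpc hjj') (hpct2 j')).mp hcontr)
      have main : ∀ i j k l : Fin v, i < j → k < l → i < k →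
          cp (pc i) (pc j) ≠ cp (pc k) (pc l) := by
        intro i j k l hij hkl hik hcontr
        rcases lt_trichotomy j k with hjk | hjk | hjk
        · -- disjoint
          exact nb4 ((eqDisj (hpc hij) (hpc hjk) (hpc hkl)).mp hcontr)
        · -- chain i < j = k < l
          subst hjk
          exact nb3 ((eqChain (hpc hij) (hpc hkl) (hpct2 l)).mp hcontr)
        · rcases lt_trichotomy j l with hjl | hjl | hjl
          · -- crossing i < k < j < l
            exact nb5 ((eqCross (hpc hik) (hpc hjk) (hpc hjl)).mp hcontr)
          · -- shared maximum i < k < j = l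
            subst hjl
            exact b2 ((eqShareMax (hpc hik) (hpc hjk) (hpct2 j)).mp hcontr)
          · -- nested i < k < l < j
            exact nb6 ((eqNest (hpc hik) (hpc hkl) (hpc hjl)).mp hcontr)
      intro i j k l hij hkl heq
      rw [hgcp, hgcp] at heq
      rcases lt_trichotomy i k with hik | hik | hik
      · exact absurd heq (main i j k l hij hkl hik)
      · subst hik
        refine ⟨rfl, ?_⟩
        rcases lt_trichotomy j l with hjl | hjl | hjl
        · exact absurd heq (main2 i j l hij (hij.trans hjl) hjl)
        · exact hjl
        · exact absurd heq.symm (main2 i l j hkl (hkl.trans hjl) hjl)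
      · exact absurd heq.symm (main k l i j hkl hij hik)

end CanRamsey


section Cliques

variable {n : ℕ}

/-- The finset of ordered `j`-cliques of `G` inside `S`. -/
def tupCl (G : SimpleGraph (Fin n)) [DecidableRel G.Adj] (j : ℕ) (S : Finset (Fin n)) :
    Finset (Fin j → Fin n) :=
  Finset.univ.filter (fun f => (∀ i, f i ∈ S) ∧ ∀ i k : Fin j, i < k → G.Adj (f i) (f k))

/-- Number of ordered pairs identity. -/
lemma pairs_eq_sum (G : SimpleGraph (Fin n)) [DecidableRel G.Adj] (S : Finset (Fin n)) :
    ((S ×ˢ S).filter fun p => G.Adj p.1 p.2).card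
      = ∑ v ∈ S, (S.filter (fun w => G.Adj v w)).card := by
  rw [Finset.card_eq_sum_card_fiberwise
    (f := Prod.fst) (t := S) (fun p hp => (Finset.mem_product.mp (Finset.mem_filter.mp hp).1).1)]
  refine Finset.sum_congr rfl (fun v hv => ?_)
  refine Finset.card_bij' (fun p _ => p.2) (fun w _ => (v, w)) ?_ ?_ ?_ ?_
  · intro p hp
    simp only [Finset.mem_filter, Finset.mem_product] at hp ⊢
    obtain ⟨⟨⟨_, h2⟩, hadj⟩, h1⟩ := hp
    exact ⟨h2, h1 ▸ hadj⟩
  · intro w hw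
    simp only [Finset.mem_filter] at hw
    exact Finset.mem_filter.mpr ⟨Finset.mem_filter.mpr
      ⟨Finset.mem_product.mpr ⟨hv, hw.1⟩, hw.2⟩, rfl⟩
  · intro p hp
    simp only [Finset.mem_filter] at hp
    exact Prod.ext hp.2.symm rfl
  · intro w _
    rfl

/-- Double counting: twice the edges within `S` is at most the number of ordered
adjacent pairs in `S`. -/
lemma two_mul_ncard_le_sum (G : SimpleGraph (Fin n)) [DecidableRel G.Adj]
    (S : Finset (Fin n)) :
    2 * ({e ∈ G.edgeSet | ∀ x ∈ e, x ∈ (S : Set (Fin n))}.ncard)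
      ≤ ∑ v ∈ S, (S.filter (fun w => G.Adj v w)).card := by
  classical
  rw [← pairs_eq_sum]
  set t := (S ×ˢ S).filter (fun p => G.Adj p.1 p.2) with ht
  set W : Set (Sym2 (Fin n)) := {e ∈ G.edgeSet | ∀ x ∈ e, x ∈ (S : Set (Fin n))} with hW
  have hWfin : W.Finite := Set.toFinite _
  rw [Set.ncard_eq_toFinset_card W hWfin]
  set WF := hWfin.toFinset with hWF
  have key : WF.card * 2 ≤ t.card * 1 := by
    refine Finset.card_mul_le_card_mul (fun e p => e = s(p.1, p.2)) ?_ ?_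
    · intro e he
      rw [Set.Finite.mem_toFinset] at he
      obtain ⟨heE, heS⟩ := he
      induction e with
      | _ x y =>
        have hadj : G.Adj x y := heE
        have hxS : x ∈ S := heS x (by simp)
        have hyS : y ∈ S := heS y (by simp)
        have hsub : ({(x, y), (y, x)} : Finset (Fin n × Fin n)) ⊆
            Finset.bipartiteAbove (fun e p => e = s(p.1, p.2)) t s(x, y) := by
          intro p hp
          simp only [Finset.mem_insert, Finset.mem_singleton] at hp
          rw [Finset.mem_bipartiteAbove]
          rcases hp with rfl | rfl
          · exact ⟨by simp [ht, hxS, hyS, hadj], rfl⟩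
          · exact ⟨by simp [ht, hxS, hyS, hadj.symm], Sym2.eq_swap⟩
        calc 2 = ({(x, y), (y, x)} : Finset (Fin n × Fin n)).card := by
                rw [Finset.card_insert_of_notMem (by simp [hadj.ne]), Finset.card_singleton]
          _ ≤ _ := Finset.card_le_card hsub
    · intro p _
      refine le_trans (Finset.card_le_card ?_) (le_of_eq (Finset.card_singleton s(p.1, p.2)))
      intro e he
      rw [Finset.mem_bipartiteBelow] at he
      simp [he.2]
  omega

/-- Supersaturation of cliques in hereditarily dense graphs. -/
lemma tup_lb (G : SimpleGraph (Fin n)) [DecidableRel G.Adj] {d' β q : ℝ}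
    (hd' : 0 < d') (hd1 : d' ≤ 1) (hq : q = d' / 4)
    (Hd : ∀ S : Finset (Fin n), β * n ≤ S.card →
      d' * ((S.card : ℝ) ^ 2 - S.card) ≤ ∑ v ∈ S, ((S.filter (fun w => G.Adj v w)).card : ℝ)) :
    ∀ (j : ℕ) (S : Finset (Fin n)), β * n ≤ q ^ j * S.card → 2 ≤ q ^ j * S.card →
      (q ^ j * S.card) ^ j ≤ ((tupCl G j S).card : ℝ) := by
  have hq0 : 0 < q := by rw [hq]; linarith
  have hq1 : q ≤ 1 := by rw [hq]; linarith
  intro j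
  induction j with
  | zero =>
    intro S _ _
    rw [pow_zero]
    have : (Fin.elim0 : Fin 0 → Fin n) ∈ tupCl G 0 S := by
      refine Finset.mem_filter.mpr ⟨Finset.mem_univ _, fun i => i.elim0, fun i _ _ => i.elim0⟩
    have := Finset.card_pos.mpr ⟨_, this⟩
    exact_mod_cast this
  | succ j IH =>
    intro S h1 h2
    set s : ℝ := (S.card : ℝ) with hs
    have hqj1 : q ^ (j + 1) ≤ 1 := pow_le_one₀ hq0.le hq1
    have hqj0 : (0 : ℝ) < q ^ (j + 1) := pow_pos hq0 _
    have hs0 : 0 ≤ s := Nat.cast_nonneg _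
    have hs2 : 2 ≤ s := le_trans h2 (by nlinarith)
    have hsn : β * n ≤ s := le_trans h1 (by nlinarith)
    have hDS := Hd S hsn
    -- the set of vertices of large degree
    set T := S.filter (fun v => (d' / 2) * (s - 1) ≤ ((S.filter (fun w => G.Adj v w)).card : ℝ))
      with hT
    have hTS : T ⊆ S := Finset.filter_subset _ _
    have hdegS : ∀ v ∈ S, ((S.filter (fun w => G.Adj v w)).card : ℝ) ≤ s - 1 := by
      intro v hv
      have hsub : S.filter (fun w => G.Adj v w) ⊆ S.erase v := by
        intro w hw
        rw [Finset.mem_filter] at hw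
        exact Finset.mem_erase.mpr ⟨hw.2.ne', hw.1⟩
      have := Finset.card_le_card hsub
      rw [Finset.card_erase_of_mem hv] at this
      have hS1 : 1 ≤ S.card := Finset.card_pos.mpr ⟨v, hv⟩
      have : ((S.filter (fun w => G.Adj v w)).card : ℝ) ≤ (S.card - 1 : ℕ) := Nat.cast_le.mpr this
      rwa [Nat.cast_sub hS1, Nat.cast_one] at this
    -- bound |T| from below
    have hTcard : q * s ≤ (T.card : ℝ) := by
      have hb1 : ∑ v ∈ T, ((S.filter (fun w => G.Adj v w)).card : ℝ) ≤ T.card * (s - 1) := by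
        refine le_trans (Finset.sum_le_card_nsmul T _ (s - 1)
          (fun v hv => hdegS v (hTS hv))) ?_
        rw [nsmul_eq_mul]
      have hb2 : ∑ v ∈ S.filter (fun v => ¬ ((d' / 2) * (s - 1) ≤
            ((S.filter (fun w => G.Adj v w)).card : ℝ))),
            ((S.filter (fun w => G.Adj v w)).card : ℝ) ≤ s * ((d' / 2) * (s - 1)) := by
        refine le_trans (Finset.sum_le_card_nsmul _ _ ((d' / 2) * (s - 1))
          (fun v hv => (not_le.mp (Finset.mem_filter.mp hv).2).le) ) ?_
        rw [nsmul_eq_mul]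
        have hcle : ((S.filter (fun v => ¬ ((d' / 2) * (s - 1) ≤
            ((S.filter (fun w => G.Adj v w)).card : ℝ)))).card : ℝ) ≤ s :=
          Nat.cast_le.mpr (Finset.card_le_card (Finset.filter_subset _ _))
        have hnn : 0 ≤ (d' / 2) * (s - 1) := by nlinarith
        nlinarith
      have hsplit := Finset.sum_filter_add_sum_filter_not S
        (fun v => (d' / 2) * (s - 1) ≤ ((S.filter (fun w => G.Adj v w)).card : ℝ))
        (fun v => ((S.filter (fun w => G.Adj v w)).card : ℝ))
      have hcomb : d' * (s ^ 2 - s) ≤ T.card * (s - 1) + s * ((d' / 2) * (s - 1)) := by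
        rw [← hT] at hsplit
        calc d' * (s ^ 2 - s) ≤ _ := hDS
          _ = _ := hsplit.symm
          _ ≤ _ := add_le_add hb1 hb2
      have hs1 : (0 : ℝ) < s - 1 := by linarith
      have hfac : (d' * s) * (s - 1) ≤ ((T.card : ℝ) + s * (d' / 2)) * (s - 1) := by
        nlinarith [hcomb]
      have := (mul_le_mul_iff_of_pos_right hs1).mp hfac
      rw [hq]
      nlinarith
    -- neighbourhoods are large
    have hNv : ∀ v ∈ T, q * s ≤ ((S.filter (fun w => G.Adj v w)).card : ℝ) := by
      intro v hv
      have := (Finset.mem_filter.mp hv).2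
      rw [hq]
      nlinarith
    -- apply the induction hypothesis in each neighbourhood
    have hIH : ∀ v ∈ T, ((q ^ (j + 1) * s) ^ j : ℝ) ≤
        ((tupCl G j (S.filter (fun w => G.Adj v w))).card : ℝ) := by
      intro v hv
      have hN := hNv v hv
      have hbase : q ^ (j + 1) * s ≤ q ^ j * ((S.filter (fun w => G.Adj v w)).card : ℝ) := by
        have : q ^ (j + 1) * s = q ^ j * (q * s) := by ring
        rw [this]
        exact mul_le_mul_of_nonneg_left hN (pow_nonneg hq0.le _)
      refine le_trans (pow_le_pow_left₀ (mul_nonneg hqj0.le hs0) hbase j) ?_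
      exact IH _ (le_trans (le_trans h1 hbase) (le_refl _)) (le_trans h2 hbase)
    -- the injection from sequences
    have hinj : (T.sigma (fun v => tupCl G j (S.filter (fun w => G.Adj v w)))).card ≤
        (tupCl G (j + 1) S).card := by
      refine Finset.card_le_card_of_injOn (fun x => Fin.cons x.1 x.2) ?_ ?_
      · intro x hx
        rw [Finset.mem_coe, Finset.mem_sigma] at hx; rw [Finset.mem_coe]
        obtain ⟨hv, hg⟩ := hx
        rw [tupCl, Finset.mem_filter] at hg ⊢
        obtain ⟨-, hgS, hgadj⟩ := hg
        dsimp only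
        refine ⟨Finset.mem_univ _, ?_, ?_⟩
        · intro i
          refine Fin.cases ?_ ?_ i
          · rw [Fin.cons_zero]; exact hTS hv
          · intro i'
            rw [Fin.cons_succ]
            exact Finset.mem_filter.mp (hgS i') |>.1
        · intro i k hik
          revert hik
          refine Fin.cases ?_ ?_ k
          · intro h; exact absurd h (Fin.not_lt_zero i)
          · intro k'
            refine Fin.cases ?_ ?_ i
            · intro _
              rw [Fin.cons_zero, Fin.cons_succ]
              exact Finset.mem_filter.mp (hgS k') |>.2
            · intro i' hik''
              rw [Fin.cons_succ, Fin.cons_succ]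
              exact hgadj i' k' (Fin.succ_lt_succ_iff.mp hik'')
      · intro x _ x' _ hxx'
        dsimp only at hxx'
        have h0 : x.1 = x'.1 := by
          have := congrFun hxx' 0
          rwa [Fin.cons_zero, Fin.cons_zero] at this
        have h1 : HEq x.2 x'.2 := by
          obtain ⟨v, g⟩ := x
          obtain ⟨v', g'⟩ := x'
          simp only at h0
          subst h0
          refine heq_of_eq (funext fun i => ?_)
          have := congrFun hxx' i.succ
          rwa [Fin.cons_succ, Fin.cons_succ] at this
        exact Sigma.ext h0 h1
    -- put everything together
    have hsum : ((T.card : ℝ)) * ((q ^ (j + 1) * s) ^ j) ≤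
        ((T.sigma (fun v => tupCl G j (S.filter (fun w => G.Adj v w)))).card : ℝ) := by
      rw [Finset.card_sigma, Nat.cast_sum]
      refine le_trans (le_of_eq ?_) (Finset.sum_le_sum hIH)
      rw [Finset.sum_const, nsmul_eq_mul]
    have hTq : q ^ (j + 1) * s ≤ (T.card : ℝ) := by
      have : q ^ (j + 1) ≤ q := by
        calc q ^ (j + 1) = q ^ j * q := by ring
          _ ≤ 1 * q := mul_le_mul_of_nonneg_right (pow_le_one₀ hq0.le hq1) hq0.le
          _ = q := one_mul q
      nlinarith
    calc (q ^ (j + 1) * s) ^ (j + 1) = (q ^ (j + 1) * s) * (q ^ (j + 1) * s) ^ j := by ring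
      _ ≤ (T.card : ℝ) * ((q ^ (j + 1) * s) ^ j) :=
          mul_le_mul_of_nonneg_right hTq (pow_nonneg (mul_nonneg hqj0.le hs0) j)
      _ ≤ _ := hsum
      _ ≤ _ := Nat.cast_le.mpr hinj

end Cliques

/-- The graph shadow of `A` as a simple graph. -/
def shadowGraph {n : ℕ} (Γ : SimpleGraph (Fin n)) (r : ℕ)
    (A : Set (Sym2 (Fin n) × Fin r)) : SimpleGraph (Fin n) where
  Adj x y := x ≠ y ∧ s(x, y) ∈ shadowEdges Γ r A
  symm := by
    constructor
    intro x y h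
    exact ⟨h.1.symm, Sym2.eq_swap ▸ h.2⟩
  loopless := ⟨fun x h => h.1 rfl⟩

lemma shadowGraph_adj {n : ℕ} (Γ : SimpleGraph (Fin n)) (r : ℕ)
    (A : Set (Sym2 (Fin n) × Fin r)) (x y : Fin n) :
    (shadowGraph Γ r A).Adj x y ↔ x ≠ y ∧ s(x, y) ∈ shadowEdges Γ r A := Iff.rfl

noncomputable instance {n r : ℕ} (Γ : SimpleGraph (Fin n)) (A : Set (Sym2 (Fin n) × Fin r)) :
    DecidableRel (shadowGraph Γ r A).Adj := fun _ _ => Classical.dec _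

set_option maxHeartbeats 1000000 in
/-- Lemma 4.4 / `lem:abund`: the family of vertex subsets of the
canonical copy hypergraph `𝓗 = 𝓗^σ_H(Γ, L)` with large graph shadow is
`(𝓗,ε)`-abundant. -/
theorem shadow_family_abundant {α : Type*} [Fintype α] (H : SimpleGraph α)
    (hH : 2 ≤ H.edgeSet.ncard) (d : ℝ) (hd : 0 < d) (r : ℕ) (hr : 1 ≤ r) :
    ∃ ρ > (0 : ℝ), ∃ γ > (0 : ℝ), ∃ ε > (0 : ℝ), ∃ N : ℕ, ∀ n ≥ N,
      ∀ Γ : SimpleGraph (Fin n), LocallyDense Γ ρ d →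
        ∀ σ : α → ℕ, Function.Injective σ →
          ∀ L : Sym2 (Fin n) → Fin r → ℕ,
            -- the vertex set of `𝓗`, namely `E(Γ) × [r]`:
            let VH : Set (Sym2 (Fin n) × Fin r) := {x | x.1 ∈ Γ.edgeSet}
            -- the family `𝓕` of subsets with large graph shadow:
            let F : Set (Set (Sym2 (Fin n) × Fin r)) := {W | W ⊆ VH ∧
              (1 - γ) * (Γ.edgeSet.ncard : ℝ) ≤ ((shadowEdges Γ r W).ncard : ℝ)}
            -- `𝓕` is `(𝓗, ε)`-abundant:
            (∀ A B : Set (Sym2 (Fin n) × Fin r), A ∈ F → A ⊆ B → B ⊆ VH → B ∈ F) ∧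
            (∀ A ∈ F, ε * (VH.ncard : ℝ) ≤ (A.ncard : ℝ)) ∧
            (∀ A ∈ F, ε * ((canHyperedges H Γ σ r L).ncard : ℝ) ≤
              ({E ∈ canHyperedges H Γ σ r L | E ⊆ A}.ncard : ℝ)) := by
  classical
  by_cases hd1 : d ≤ 1
  swap
  · -- vacuous branch: no graph is (1,d)-dense for d > 1 once n ≥ 2
    refine ⟨1, one_pos, 1, one_pos, 1, one_pos, 2, ?_⟩
    intro n hn Γ hdense σ hσ L VH F
    exfalso
    have hcard : (Set.univ : Set (Fin n)).ncard = n := by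
      rw [Set.ncard_univ, Nat.card_eq_fintype_card, Fintype.card_fin]
    have h1 := hdense Set.univ (by rw [hcard]; exact le_of_eq (one_mul _))
    rw [hcard] at h1
    letI : DecidableRel Γ.Adj := fun a b => Classical.dec _
    have heq : edgesWithin Γ Set.univ = Γ.edgeSet.ncard := by
      unfold edgesWithin
      congr 1
      ext e
      simp
    have hle : Γ.edgeSet.ncard ≤ n.choose 2 := by
      rw [Set.ncard_eq_toFinset_card']
      have := SimpleGraph.card_edgeFinset_le_card_choose_two (G := Γ)
      rw [SimpleGraph.edgeFinset, Fintype.card_fin] at this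
      exact this
    rw [heq] at h1
    have hchoose : 1 ≤ n.choose 2 := by
      have : (2).choose 2 ≤ n.choose 2 := Nat.choose_le_choose 2 hn
      simpa using this
    have hc : (1 : ℝ) ≤ (n.choose 2 : ℝ) := by exact_mod_cast hchoose
    have hle' : (Γ.edgeSet.ncard : ℝ) ≤ (n.choose 2 : ℝ) := by exact_mod_cast hle
    nlinarith
  -- main branch
  set v := Fintype.card α with hv
  obtain ⟨m, hvm, hcanR⟩ := canRamsey v
  have hm0 : 0 < m := by omega
  set q : ℝ := d / 8 with hqdef
  have hq0 : 0 < q := by rw [hqdef]; linarith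
  have hq1 : q ≤ 1 := by rw [hqdef]; linarith
  set β : ℝ := q ^ m with hβdef
  have hβ0 : 0 < β := pow_pos hq0 m
  have hβ1 : β ≤ 1 := pow_le_one₀ hq0.le hq1
  set γ : ℝ := d * β ^ 2 / 16 with hγdef
  have hγ0 : 0 < γ := by rw [hγdef]; positivity
  have hγ16 : γ ≤ 1 / 16 := by
    rw [hγdef]
    nlinarith
  set S2 := Nat.card (Sym2 α) with hS2
  set ε0 : ℝ := (q ^ m) ^ m / ((m : ℝ) ^ m * (r : ℝ) ^ S2) with hε0def
  have hmR : (0:ℝ) < (m : ℝ) ^ m := by positivity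
  have hrR : (0:ℝ) < (r : ℝ) ^ S2 := by
    have : (0:ℝ) < (r:ℝ) := by exact_mod_cast hr
    positivity
  have hε00 : 0 < ε0 := by rw [hε0def]; positivity
  set ε : ℝ := min ε0 (1 / (2 * r)) with hεdef
  have hε0' : 0 < ε := by
    refine lt_min hε00 ?_
    have : (0:ℝ) < (r:ℝ) := by exact_mod_cast hr
    positivity
  refine ⟨β, hβ0, γ, hγ0, ε, hε0', max 2 ⌈(2:ℝ) / β⌉₊, ?_⟩
  intro n hn Γ hdense σ hσ L VH F
  have hn2 : 2 ≤ n := le_trans (le_max_left _ _) hn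
  have hn0 : 0 < n := by omega
  have hnR : (0:ℝ) < (n:ℝ) := by exact_mod_cast hn0
  have hβn : (2:ℝ) ≤ β * n := by
    have h1 : (⌈(2:ℝ) / β⌉₊ : ℝ) ≤ n := by
      exact_mod_cast Nat.cast_le.mpr (le_trans (le_max_right 2 _) hn)
    have h2 : (2:ℝ) / β ≤ n := le_trans (Nat.le_ceil _) h1
    calc (2:ℝ) = β * (2 / β) := by field_simp
      _ ≤ β * n := by exact mul_le_mul_of_nonneg_left h2 hβ0.le
  letI : DecidableRel Γ.Adj := fun a b => Classical.dec _
  set eΓ := Γ.edgeSet.ncard with heΓ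
  -- upper bound on eΓ
  have heΓn : (eΓ : ℝ) ≤ 2 * n ^ 2 := by
    have h1 : eΓ ≤ Nat.card (Sym2 (Fin n)) := by
      rw [heΓ, ← Set.ncard_univ]
      exact Set.ncard_le_ncard (Set.subset_univ _) (Set.toFinite _)
    have h2 : Nat.card (Sym2 (Fin n)) ≤ 2 * n ^ 2 := by
      rw [Nat.card_eq_fintype_card, Sym2.card, Fintype.card_fin]
      have hd2 : (n + 1).choose 2 ≤ (n + 1) * n := by
        rw [Nat.choose_two_right]
        simpa using Nat.div_le_self ((n + 1) * n) 2
      nlinarith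
    have h3 : eΓ ≤ 2 * n ^ 2 := le_trans h1 h2
    exact_mod_cast h3
  -- membership in F unfolded
  have hmemF : ∀ W, W ∈ F ↔ (W ⊆ VH ∧
      (1 - γ) * (eΓ : ℝ) ≤ ((shadowEdges Γ r W).ncard : ℝ)) := fun W => Iff.rfl
  refine ⟨?_, ?_, ?_⟩
  · -- part 1: increasing family
    intro A B hA hAB hBVH
    obtain ⟨-, hA2⟩ := (hmemF A).mp hA
    refine (hmemF B).mpr ⟨hBVH, le_trans hA2 ?_⟩
    have hsub : shadowEdges Γ r A ⊆ shadowEdges Γ r B := by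
      rintro e ⟨he, s, hs⟩
      exact ⟨he, s, hAB hs⟩
    exact_mod_cast Set.ncard_le_ncard hsub (Set.toFinite _)
  · -- part 2: size of members
    intro A hA
    obtain ⟨hAV, hA2⟩ := (hmemF A).mp hA
    have hsh : ((shadowEdges Γ r A).ncard : ℝ) ≤ (A.ncard : ℝ) := by
      have hmaps : ∀ e ∈ shadowEdges Γ r A,
          (e, if h : ∃ s, (e, s) ∈ A then h.choose else (⟨0, hr⟩ : Fin r)) ∈ A := by
        intro e he
        obtain ⟨heΓ', s, hs⟩ := he
        have hex : ∃ s, (e, s) ∈ A := ⟨s, hs⟩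
        simpa only [dif_pos hex] using hex.choose_spec
      have := Set.ncard_le_ncard_of_injOn
        (fun e => (e, if h : ∃ s, (e, s) ∈ A then h.choose else (⟨0, hr⟩ : Fin r)))
        hmaps (fun e _ e' _ h => (Prod.ext_iff.mp h).1) (Set.toFinite A)
      exact_mod_cast this
    have hVHcard : (VH.ncard : ℝ) ≤ (eΓ : ℝ) * r := by
      have h1 : VH.ncard ≤ (Γ.edgeSet ×ˢ (Set.univ : Set (Fin r))).ncard :=
        Set.ncard_le_ncard (fun x hx => ⟨hx, trivial⟩) (Set.toFinite _)
      have h2 : (Γ.edgeSet ×ˢ (Set.univ : Set (Fin r))).ncard = eΓ * r := by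
        rw [← Nat.card_coe_set_eq, Nat.card_congr (Equiv.Set.prod _ _), Nat.card_prod,
          Nat.card_coe_set_eq, Nat.card_coe_set_eq, Set.ncard_univ,
          Nat.card_eq_fintype_card, Fintype.card_fin]
      rw [h2] at h1
      exact_mod_cast h1
    have hεr : ε * ((eΓ : ℝ) * r) ≤ (1 - γ) * eΓ := by
      have h1 : ε ≤ 1 / (2 * r) := min_le_right _ _
      have hrR' : (0:ℝ) < (r:ℝ) := by exact_mod_cast hr
      have h2 : ε * ((eΓ : ℝ) * r) ≤ (1 / (2 * r)) * ((eΓ : ℝ) * r) := by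
        have : (0:ℝ) ≤ (eΓ : ℝ) * r := by positivity
        exact mul_le_mul_of_nonneg_right h1 this
      have h3 : (1 / (2 * (r:ℝ))) * ((eΓ : ℝ) * r) = eΓ / 2 := by field_simp
      rw [h3] at h2
      have : (eΓ:ℝ) / 2 ≤ (1 - γ) * eΓ := by nlinarith [Nat.cast_nonneg (α := ℝ) eΓ]
      linarith
    calc ε * (VH.ncard : ℝ) ≤ ε * ((eΓ : ℝ) * r) :=
          mul_le_mul_of_nonneg_left hVHcard hε0'.le
      _ ≤ (1 - γ) * eΓ := hεr
      _ ≤ _ := hA2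
      _ ≤ _ := hsh
  · -- part 3: abundance of hyperedges
    intro A hA
    obtain ⟨hAV, hA2⟩ := (hmemF A).mp hA
    -- a colour selection compatible with A
    set sel : Sym2 (Fin n) → Fin r :=
      fun e => if h : ∃ s, (e, s) ∈ A then h.choose else (⟨0, hr⟩ : Fin r) with hseldef
    have hsel : ∀ e ∈ shadowEdges Γ r A, (e, sel e) ∈ A := by
      intro e he
      obtain ⟨heΓ', s, hs⟩ := he
      have hex : ∃ s, (e, s) ∈ A := ⟨s, hs⟩
      simpa only [hseldef, dif_pos hex] using hex.choose_spec
    set cc : Sym2 (Fin n) → ℕ := fun e => L e (sel e) with hccdef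
    -- the shadow graph
    set G' : SimpleGraph (Fin n) := shadowGraph Γ r A with hG'def
    have hG'adj : ∀ x y : Fin n, G'.Adj x y ↔ x ≠ y ∧ s(x, y) ∈ shadowEdges Γ r A :=
      fun x y => Iff.rfl
    have hG'Γ : ∀ {x y : Fin n}, G'.Adj x y → Γ.Adj x y := by
      intro x y h
      exact h.2.1
    have hG'sh : ∀ {x y : Fin n}, G'.Adj x y → s(x, y) ∈ shadowEdges Γ r A := fun h => h.2
    have hG'ne : ∀ {x y : Fin n}, G'.Adj x y → x ≠ y := fun h => h.1
    -- edges within S of G' vs Γ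
    have hM : ((Γ.edgeSet \ shadowEdges Γ r A).ncard : ℝ) ≤ γ * eΓ := by
      have hsub : shadowEdges Γ r A ⊆ Γ.edgeSet := fun e he => he.1
      rw [Set.ncard_diff hsub (Set.toFinite _)]
      have hle : (shadowEdges Γ r A).ncard ≤ eΓ := Set.ncard_le_ncard hsub (Set.toFinite _)
      rw [Nat.cast_sub hle]
      linarith [hA2]
    -- hereditary density of the shadow graph
    have Hd : ∀ S : Finset (Fin n), β * n ≤ S.card →
        (d / 2) * ((S.card : ℝ) ^ 2 - S.card) ≤
          ∑ x ∈ S, ((S.filter (fun w => G'.Adj x w)).card : ℝ) := by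
      intro S hS
      set sc : ℝ := (S.card : ℝ) with hsc
      have hsc2 : 2 ≤ sc := le_trans hβn hS
      -- edges of Γ within S
      have hdense' := hdense (↑S : Set (Fin n)) (by rwa [Set.ncard_coe_finset])
      rw [Set.ncard_coe_finset] at hdense'
      have hch : ((S.card).choose 2 : ℝ) = sc * (sc - 1) / 2 := by
        rw [Nat.cast_choose_two]
      rw [hch] at hdense'
      -- within-G' edges are many
      have hsubW : {e ∈ Γ.edgeSet | ∀ x ∈ e, x ∈ (↑S : Set (Fin n))} ⊆
          {e ∈ G'.edgeSet | ∀ x ∈ e, x ∈ (↑S : Set (Fin n))} ∪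
            (Γ.edgeSet \ shadowEdges Γ r A) := by
        rintro e ⟨heE, heS⟩
        by_cases hsh : e ∈ shadowEdges Γ r A
        · left
          refine ⟨?_, heS⟩
          induction e with
          | _ x y =>
            have : Γ.Adj x y := heE
            exact ⟨this.ne, hsh⟩
        · right
          exact ⟨heE, hsh⟩
      have hWcard : (edgesWithin Γ (↑S) : ℝ) ≤
          ({e ∈ G'.edgeSet | ∀ x ∈ e, x ∈ (↑S : Set (Fin n))}.ncard : ℝ) + γ * eΓ := by
        have h1 := Set.ncard_le_ncard hsubW (Set.toFinite _)
        have h2 := Set.ncard_union_le ({e ∈ G'.edgeSet | ∀ x ∈ e, x ∈ (↑S : Set (Fin n))})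
          (Γ.edgeSet \ shadowEdges Γ r A)
        have h3 := le_trans h1 h2
        have h4 : (edgesWithin Γ (↑S) : ℝ) ≤
            ({e ∈ G'.edgeSet | ∀ x ∈ e, x ∈ (↑S : Set (Fin n))}.ncard : ℝ) +
              ((Γ.edgeSet \ shadowEdges Γ r A).ncard : ℝ) := by exact_mod_cast h3
        linarith
      have hsum := two_mul_ncard_le_sum G' S
      have hsumR : 2 * ({e ∈ G'.edgeSet | ∀ x ∈ e, x ∈ (↑S : Set (Fin n))}.ncard : ℝ) ≤
          ∑ x ∈ S, ((S.filter (fun w => G'.Adj x w)).card : ℝ) := by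
        rw [← Nat.cast_sum]
        exact_mod_cast hsum
      -- the numeric combination
      have hβs : β * (n : ℝ) ≤ sc := hS
      have hkey : 2 * γ * eΓ ≤ (d / 2) * (sc ^ 2 - sc) := by
        have h1 : (eΓ : ℝ) ≤ 2 * n ^ 2 := heΓn
        have h2 : β ^ 2 * (n : ℝ) ^ 2 ≤ sc ^ 2 := by nlinarith
        have h3 : sc ^ 2 - sc ≥ sc ^ 2 / 2 := by nlinarith
        have h4 : γ * eΓ ≤ (d * β ^ 2 / 16) * (2 * n ^ 2) := by
          have : (0:ℝ) ≤ γ := hγ0.le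
          nlinarith [Nat.cast_nonneg (α := ℝ) eΓ]
        nlinarith
      nlinarith [hdense', hWcard, hsumR, hM]
    -- many ordered m-cliques in G'
    have htup : ((q ^ m * n) ^ m : ℝ) ≤ ((tupCl G' m Finset.univ).card : ℝ) := by
      have hc : ((Finset.univ : Finset (Fin n)).card : ℝ) = n := by
        rw [Finset.card_univ, Fintype.card_fin]
      have := tup_lb G' (d' := d / 2) (β := β) (q := q)
        (by linarith : (0:ℝ) < d / 2) (by linarith : d / 2 ≤ 1)
        (by rw [hqdef]; ring) Hd m Finset.univ (by rw [hc, ← hβdef]) (by rw [hc, ← hβdef]; exact hβn)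
      rwa [hc] at this
    -- unordered cliques
    set 𝒬 : Finset (Finset (Fin n)) :=
      (tupCl G' m Finset.univ).image (fun f => Finset.image f Finset.univ) with h𝒬def
    have htupmem : ∀ f ∈ tupCl G' m Finset.univ,
        ∀ i k : Fin m, i < k → G'.Adj (f i) (f k) := by
      intro f hf
      exact (Finset.mem_filter.mp hf).2.2
    have htupinj : ∀ f ∈ tupCl G' m Finset.univ, Function.Injective f := by
      intro f hf i k hik
      by_contra hne
      rcases lt_or_gt_of_ne hne with h | h
      · exact hG'ne (htupmem f hf i k h) hik
      · exact hG'ne (htupmem f hf k i h) hik.symm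
    have hQcard : ∀ Q ∈ 𝒬, Q.card = m := by
      intro Q hQ
      obtain ⟨f, hf, rfl⟩ := Finset.mem_image.mp hQ
      rw [Finset.card_image_of_injective _ (htupinj f hf), Finset.card_univ, Fintype.card_fin]
    have hQclique : ∀ Q ∈ 𝒬, ∀ x ∈ Q, ∀ y ∈ Q, x ≠ y → G'.Adj x y := by
      intro Q hQ x hx y hy hxy
      obtain ⟨f, hf, rfl⟩ := Finset.mem_image.mp hQ
      obtain ⟨i, -, rfl⟩ := Finset.mem_image.mp hx
      obtain ⟨k, -, rfl⟩ := Finset.mem_image.mp hy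
      have hik : i ≠ k := fun h => hxy (by rw [h])
      rcases lt_or_gt_of_ne hik with h | h
      · exact htupmem f hf i k h
      · exact (htupmem f hf k i h).symm
    -- tuples vs cliques
    have hcount1 : (tupCl G' m Finset.univ).card ≤ m ^ m * 𝒬.card := by
      refine Finset.card_le_mul_card_image _ _ ?_
      intro Q hQ
      have hQm : Q.card = m := hQcard Q (by rwa [h𝒬def])
      have hsub : (tupCl G' m Finset.univ).filter (fun f => Finset.image f Finset.univ = Q)
          ⊆ Fintype.piFinset (fun _ : Fin m => Q) := by
        intro f hf
        rw [Finset.mem_filter] at hf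
        rw [Fintype.mem_piFinset]
        intro i
        rw [← hf.2]
        exact Finset.mem_image_of_mem f (Finset.mem_univ i)
      have hcard := Finset.card_le_card hsub
      rw [Fintype.card_piFinset, Finset.prod_const, Finset.card_univ, Fintype.card_fin,
        hQm] at hcard
      exact hcard
    -- enumerate α by σ-order
    have hTσcard : (Finset.image σ Finset.univ).card = v := by
      rw [Finset.card_image_of_injective _ hσ, Finset.card_univ, hv]
    set oe : Fin v → ℕ := ⇑((Finset.image σ Finset.univ).orderEmbOfFin hTσcard) with hoedef
    have hoemono : StrictMono oe := ((Finset.image σ Finset.univ).orderEmbOfFin hTσcard).strictMono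
    have hoemem : ∀ i, ∃ a : α, σ a = oe i := by
      intro i
      have h := (Finset.image σ Finset.univ).orderEmbOfFin_mem hTσcard i
      obtain ⟨a, -, ha⟩ := Finset.mem_image.mp h
      exact ⟨a, ha⟩
    set eA : Fin v → α := fun i => (hoemem i).choose with heAdef
    have heA : ∀ i, σ (eA i) = oe i := fun i => (hoemem i).choose_spec
    have hidx' : ∀ a : α, ∃ i, oe i = σ a := by
      intro a
      have hmem : σ a ∈ (↑(Finset.image σ Finset.univ) : Set ℕ) :=
        Finset.mem_coe.mpr (Finset.mem_image_of_mem σ (Finset.mem_univ a))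
      rw [← Finset.range_orderEmbOfFin _ hTσcard] at hmem
      exact hmem
    set idx : α → Fin v := fun a => (hidx' a).choose with hidxdef
    have hidx : ∀ a, oe (idx a) = σ a := fun a => (hidx' a).choose_spec
    have heAidx : ∀ a, eA (idx a) = a := by
      intro a
      apply hσ
      rw [heA, hidx]
    have hidxlt : ∀ {a b : α}, σ a < σ b ↔ idx a < idx b := by
      intro a b
      rw [← hidx a, ← hidx b]
      exact hoemono.lt_iff_lt
    have hidxinj : Function.Injective idx := by
      intro a b h
      have h1 := heAidx a
      rw [h, heAidx b] at h1
      exact h1.symm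
    -- supported vertices
    set VS : Finset α := Finset.univ.filter (fun a : α => ∃ b, H.Adj a b) with hVSdef
    set v' : ℕ := VS.card with hv'def
    have hv'v : v' ≤ v := by
      rw [hv'def, hv]
      exact le_trans (Finset.card_filter_le _ _) (le_of_eq Finset.card_univ)
    set UF : Set (Sym2 (Fin n) × Fin r) → Finset (Fin n) :=
      fun E => Finset.univ.filter (fun x => ∃ p ∈ E, x ∈ p.1) with hUFdef
    -- canonical copies inside cliques
    have hexists : ∀ Q ∈ 𝒬, ∃ E, E ∈ canHyperedges H Γ σ r L ∧ E ⊆ A ∧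
        UF E ⊆ Q ∧ (UF E).card = v' := by
      intro Q hQ
      obtain ⟨g, hgmono, hgQ, hcases⟩ := hcanR Q cc (le_of_eq (hQcard Q hQ).symm)
      have build : ∀ f : α → Fin n, Function.Injective f → (∀ a, f a ∈ Q) →
          IsCanonicalPattern H σ (fun e => cc (Sym2.map f e)) →
          ∃ E, E ∈ canHyperedges H Γ σ r L ∧ E ⊆ A ∧ UF E ⊆ Q ∧ (UF E).card = v' := by
        intro f hfinj hfQ hpat
        have hfG' : ∀ {a b : α}, H.Adj a b → G'.Adj (f a) (f b) := by
          intro a b hab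
          exact hQclique Q hQ _ (hfQ a) _ (hfQ b) (fun h => hab.ne (hfinj h))
        have hEsh : ∀ e ∈ H.edgeSet, Sym2.map f e ∈ shadowEdges Γ r A := by
          intro e he
          induction e with
          | _ a b =>
            have hab : H.Adj a b := he
            rw [Sym2.map_pair_eq]
            exact hG'sh (hfG' hab)
        refine ⟨(fun e => (Sym2.map f e, sel (Sym2.map f e))) '' H.edgeSet,
          ⟨f, fun e => sel (Sym2.map f e), hfinj,
            fun a b hab => hG'Γ (hfG' hab), hpat, rfl⟩, ?_, ?_, ?_⟩
        · rintro p ⟨e, he, rfl⟩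
          exact hsel _ (hEsh e he)
        · intro x hx
          rw [hUFdef, Finset.mem_filter] at hx
          obtain ⟨-, p, ⟨e, he, rfl⟩, hxp⟩ := hx
          have hxp' : x ∈ Sym2.map f e := hxp
          clear hxp
          induction e with
          | _ a b =>
            rw [Sym2.map_pair_eq] at hxp'
            rcases Sym2.mem_iff.mp hxp' with rfl | rfl
            · exact hfQ a
            · exact hfQ b
        · have hUFE : UF ((fun e => (Sym2.map f e, sel (Sym2.map f e))) '' H.edgeSet)
              = VS.image f := by
            ext x
            constructor
            · intro hx
              have hx' : ∃ p ∈ (fun e => (Sym2.map f e, sel (Sym2.map f e))) '' H.edgeSet,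
                  x ∈ p.1 := (Finset.mem_filter.mp hx).2
              obtain ⟨p, ⟨e, he, rfl⟩, hxp⟩ := hx'
              have hxp' : x ∈ Sym2.map f e := hxp
              clear hxp
              refine Finset.mem_image.mpr ?_
              induction e with
              | _ a b =>
                have hab : H.Adj a b := he
                rw [Sym2.map_pair_eq] at hxp'
                rcases Sym2.mem_iff.mp hxp' with rfl | rfl
                · exact ⟨a, Finset.mem_filter.mpr ⟨Finset.mem_univ _, b, hab⟩, rfl⟩
                · exact ⟨b, Finset.mem_filter.mpr ⟨Finset.mem_univ _, a, hab.symm⟩, rfl⟩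
            · intro hx
              obtain ⟨a, ha, rfl⟩ := Finset.mem_image.mp hx
              obtain ⟨b, hab⟩ := (Finset.mem_filter.mp ha).2
              refine Finset.mem_filter.mpr ⟨Finset.mem_univ _,
                (Sym2.map f s(a, b), sel (Sym2.map f s(a, b))),
                ⟨s(a, b), hab, rfl⟩, ?_⟩
              rw [Sym2.map_pair_eq]
              exact Sym2.mem_mk_left _ _
          rw [hUFE, Finset.card_image_of_injective _ hfinj, hv'def]
      -- the edge normal form
      have hedge : ∀ e ∈ H.edgeSet, ∃ i j : Fin v, i < j ∧
          Sym2.map (fun a => g (idx a)) e = s(g i, g j) ∧ e = s(eA i, eA j) := by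
        intro e he
        induction e with
        | _ x y =>
          have hxy : H.Adj x y := he
          have hne : idx x ≠ idx y := fun h => hxy.ne (hidxinj h)
          rcases lt_or_gt_of_ne hne with h | h
          · exact ⟨idx x, idx y, h, by rw [Sym2.map_pair_eq],
              by rw [heAidx, heAidx]⟩
          · refine ⟨idx y, idx x, h, by rw [Sym2.map_pair_eq]; exact Sym2.eq_swap, ?_⟩
            rw [heAidx, heAidx]
            exact Sym2.eq_swap
      rcases hcases with ⟨col, hcol⟩ | hrain | ⟨ψ, hψinj, hψ⟩ | ⟨ψ, hψinj, hψ⟩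
      · -- monochromatic
        refine build (fun a => g (idx a)) (hgmono.injective.comp hidxinj)
          (fun a => hgQ _) ?_
        left
        refine ⟨col, ?_⟩
        intro e he
        obtain ⟨i, j, hij, hmap, -⟩ := hedge e he
        dsimp only
        rw [hmap]
        exact hcol i j hij
      · -- rainbow
        refine build (fun a => g (idx a)) (hgmono.injective.comp hidxinj)
          (fun a => hgQ _) ?_
        right; left
        intro e1 h1 e2 h2 heq
        obtain ⟨i, j, hij, hmap1, he1⟩ := hedge e1 h1
        obtain ⟨k, l, hkl, hmap2, he2⟩ := hedge e2 h2
        dsimp only at heq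
        rw [hmap1, hmap2] at heq
        obtain ⟨hik, hjl⟩ := hrain i j k l hij hkl heq
        rw [he1, he2, hik, hjl]
      · -- min-lexicographic
        refine build (fun a => g (idx a)) (hgmono.injective.comp hidxinj)
          (fun a => hgQ _) ?_
        right; right
        refine ⟨fun a => ψ (idx a), hψinj.comp hidxinj, ?_⟩
        intro a b hab hσab
        dsimp only
        rw [Sym2.map_pair_eq]
        exact hψ _ _ (hidxlt.mp hσab)
      · -- max-lexicographic: reverse the embedding
        set rev : Fin v → Fin v := fun i => ⟨v - 1 - (i : ℕ), by omega⟩ with hrevdef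
        have hrevanti : ∀ {i j : Fin v}, i < j → rev j < rev i := by
          intro i j h
          have h' : (i : ℕ) < (j : ℕ) := h
          have hj : (j : ℕ) < v := j.isLt
          simp only [hrevdef, Fin.mk_lt_mk]
          omega
        have hrevinj : Function.Injective rev := by
          intro i j h
          simp only [hrevdef, Fin.mk.injEq] at h
          have hi : (i : ℕ) < v := i.isLt
          have hj : (j : ℕ) < v := j.isLt
          exact Fin.ext (by omega)
        refine build (fun a => g (rev (idx a)))
          (hgmono.injective.comp (hrevinj.comp hidxinj)) (fun a => hgQ _) ?_
        right; right
        refine ⟨fun a => ψ (rev (idx a)), hψinj.comp (hrevinj.comp hidxinj), ?_⟩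
        intro a b hab hσab
        dsimp only
        rw [Sym2.map_pair_eq, Sym2.eq_swap]
        exact hψ _ _ (hrevanti (hidxlt.mp hσab))
    -- choose hyperedges for cliques
    set Ech : Finset (Fin n) → Set (Sym2 (Fin n) × Fin r) := fun Q =>
      if h : ∃ E, E ∈ canHyperedges H Γ σ r L ∧ E ⊆ A ∧ UF E ⊆ Q ∧ (UF E).card = v'
      then h.choose else ∅ with hEchdef
    have hEch : ∀ Q ∈ 𝒬, Ech Q ∈ canHyperedges H Γ σ r L ∧ Ech Q ⊆ A ∧
        UF (Ech Q) ⊆ Q ∧ (UF (Ech Q)).card = v' := by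
      intro Q hQ
      have h := hexists Q hQ
      simpa only [hEchdef, dif_pos h] using h.choose_spec
    -- cliques vs chosen hyperedges
    have hcount2 : 𝒬.card ≤ n ^ (m - v') * (𝒬.image Ech).card := by
      refine Finset.card_le_mul_card_image _ _ ?_
      intro E0 hE0
      have hfib : (𝒬.filter (fun Q => Ech Q = E0)).card ≤
          (Finset.powersetCard (m - v') (Finset.univ : Finset (Fin n))).card := by
        refine Finset.card_le_card_of_injOn (fun Q => Q \ UF E0) ?_ ?_
        · intro Q hQ'
          rw [Finset.mem_coe, Finset.mem_filter] at hQ'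
          obtain ⟨hQ𝒬, hQE⟩ := hQ'
          obtain ⟨-, -, hUQ, hUcard⟩ := hEch Q hQ𝒬
          rw [hQE] at hUQ hUcard
          rw [Finset.mem_coe, Finset.mem_powersetCard]
          refine ⟨Finset.subset_univ _, ?_⟩
          rw [Finset.card_sdiff_of_subset hUQ, hUcard, hQcard Q hQ𝒬]
        · intro Q1 h1 Q2 h2 heq
          dsimp only at heq
          have h1' := Finset.mem_filter.mp (Finset.mem_coe.mp h1)
          have h2' := Finset.mem_filter.mp (Finset.mem_coe.mp h2)
          obtain ⟨-, -, hU1, -⟩ := hEch Q1 h1'.1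
          obtain ⟨-, -, hU2, -⟩ := hEch Q2 h2'.1
          rw [h1'.2] at hU1
          rw [h2'.2] at hU2
          calc Q1 = Q1 \ UF E0 ∪ UF E0 := (Finset.sdiff_union_of_subset hU1).symm
            _ = Q2 \ UF E0 ∪ UF E0 := by rw [heq]
            _ = Q2 := Finset.sdiff_union_of_subset hU2
      rw [Finset.card_powersetCard, Finset.card_univ, Fintype.card_fin] at hfib
      exact le_trans hfib (Nat.choose_le_pow n (m - v'))
    -- the image consists of contained hyperedges
    have himg : ((𝒬.image Ech).card : ℝ) ≤
        ({E ∈ canHyperedges H Γ σ r L | E ⊆ A}.ncard : ℝ) := by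
      have hsub : ↑(𝒬.image Ech) ⊆ {E ∈ canHyperedges H Γ σ r L | E ⊆ A} := by
        intro E hE
        obtain ⟨Q, hQ, rfl⟩ := Finset.mem_image.mp (Finset.mem_coe.mp hE)
        obtain ⟨hc1, hc2, -, -⟩ := hEch Q hQ
        exact ⟨hc1, hc2⟩
      have h := Set.ncard_le_ncard hsub (Set.toFinite _)
      rw [Set.ncard_coe_finset] at h
      exact_mod_cast h
    -- upper bound for the number of canonical hyperedges
    have hcanub : ((canHyperedges H Γ σ r L).ncard : ℝ) ≤ (n:ℝ) ^ v' * (r:ℝ) ^ S2 := by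
      set x0 : Fin n := ⟨0, hn0⟩ with hx0
      set Φ : ({a : α // ∃ b, H.Adj a b} → Fin n) × (Sym2 α → Fin r) →
          Set (Sym2 (Fin n) × Fin r) := fun gτ =>
        (fun e => (Sym2.map (fun a => if h : ∃ b, H.Adj a b then gτ.1 ⟨a, h⟩ else x0) e,
          gτ.2 e)) '' H.edgeSet with hΦdef
      have hsub : canHyperedges H Γ σ r L ⊆ Set.range Φ := by
        rintro E ⟨f, t, hfinj, hfadj, hpat, rfl⟩
        refine ⟨(fun a => f a.1, t), ?_⟩
        rw [hΦdef]
        dsimp only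
        refine Set.image_congr ?_
        intro e he
        have hmapeq : Sym2.map (fun a => if h : ∃ b, H.Adj a b then f a else x0) e
            = Sym2.map f e := by
          induction e with
          | _ a b =>
            have hab : H.Adj a b := he
            rw [Sym2.map_pair_eq, Sym2.map_pair_eq, dif_pos ⟨b, hab⟩, dif_pos ⟨a, hab.symm⟩]
        rw [hmapeq]
      have h1 : (canHyperedges H Γ σ r L).ncard ≤ (Set.range Φ).ncard :=
        Set.ncard_le_ncard hsub (Set.toFinite _)
      have h2 : (Set.range Φ).ncard ≤
          Nat.card (({a : α // ∃ b, H.Adj a b} → Fin n) × (Sym2 α → Fin r)) := by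
        rw [← Set.image_univ, ← Set.ncard_univ
          (({a : α // ∃ b, H.Adj a b} → Fin n) × (Sym2 α → Fin r))]
        exact Set.ncard_image_le (Set.toFinite _)
      have hsubcard : Nat.card {a : α // ∃ b, H.Adj a b} = v' := by
        rw [Nat.card_eq_fintype_card, Fintype.card_subtype, hv'def, hVSdef]
      have h3 : Nat.card (({a : α // ∃ b, H.Adj a b} → Fin n) × (Sym2 α → Fin r))
          = n ^ v' * r ^ S2 := by
        rw [Nat.card_prod, Nat.card_fun, Nat.card_fun, hsubcard,
          Nat.card_eq_fintype_card (α := Fin n), Fintype.card_fin,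
          Nat.card_eq_fintype_card (α := Fin r), Fintype.card_fin, hS2]
      have h4 := le_trans h1 (h3 ▸ h2)
      exact_mod_cast h4
    -- final arithmetic
    clear_value Ech UF VS v' 𝒬
    have hεε0 : ε ≤ ε0 := min_le_left _ _
    have himg_lb : ((q ^ m) ^ m * (n:ℝ) ^ v' / (m:ℝ) ^ m) ≤ ((𝒬.image Ech).card : ℝ) := by
      have hc1 : ((tupCl G' m Finset.univ).card : ℝ) ≤ (m:ℝ) ^ m * (𝒬.card : ℝ) := by
        exact_mod_cast hcount1
      have hc2 : (𝒬.card : ℝ) ≤ (n:ℝ) ^ (m - v') * ((𝒬.image Ech).card : ℝ) := by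
        exact_mod_cast hcount2
      have hmv : (m - v') + v' = m := by omega
      have hnm : (n:ℝ) ^ m = (n:ℝ) ^ (m - v') * (n:ℝ) ^ v' := by rw [← pow_add, hmv]
      have hpow : (0:ℝ) < (n:ℝ) ^ (m - v') := by positivity
      have himgnn : (0:ℝ) ≤ ((𝒬.image Ech).card : ℝ) := Nat.cast_nonneg _
      have hchain : ((q ^ m * n) ^ m : ℝ) ≤
          (m:ℝ) ^ m * ((n:ℝ) ^ (m - v') * ((𝒬.image Ech).card : ℝ)) :=
        le_trans htup (le_trans hc1 (mul_le_mul_of_nonneg_left hc2 (by positivity)))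
      have h5 : ((q ^ m) ^ m * (n:ℝ) ^ v') * (n:ℝ) ^ (m - v') ≤
          ((m:ℝ) ^ m * ((𝒬.image Ech).card : ℝ)) * (n:ℝ) ^ (m - v') := by
        calc ((q ^ m) ^ m * (n:ℝ) ^ v') * (n:ℝ) ^ (m - v')
            = (q ^ m * n) ^ m := by rw [mul_pow, hnm]; ring
          _ ≤ (m:ℝ) ^ m * ((n:ℝ) ^ (m - v') * ((𝒬.image Ech).card : ℝ)) := hchain
          _ = ((m:ℝ) ^ m * ((𝒬.image Ech).card : ℝ)) * (n:ℝ) ^ (m - v') := by ring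
      have h6 := (mul_le_mul_iff_of_pos_right hpow).mp h5
      rw [div_le_iff₀ hmR]
      exact le_trans h6 (le_of_eq (mul_comm _ _))
    have hε0eq : ε0 * ((n:ℝ) ^ v' * (r:ℝ) ^ S2)
        = (q ^ m) ^ m * (n:ℝ) ^ v' / (m:ℝ) ^ m := by
      rw [hε0def]
      field_simp
    calc ε * ((canHyperedges H Γ σ r L).ncard : ℝ)
        ≤ ε0 * ((n:ℝ) ^ v' * (r:ℝ) ^ S2) :=
          mul_le_mul hεε0 hcanub (Nat.cast_nonneg _) hε00.le
      _ = (q ^ m) ^ m * (n:ℝ) ^ v' / (m:ℝ) ^ m := hε0eq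
      _ ≤ ((𝒬.image Ech).card : ℝ) := himg_lb
      _ ≤ _ := himg
end
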